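/- arXiv:2302.06869 — 8 statements merged into one kernel-verified Lean document; each statement's English description precedes it below -/
import Mathlib

section
/- If X is a binomial random variable with m trials and success probability p > 0, then E[1/((X+1)(X+2))] ≤ 1/(p^2 (m+1)(m+2)). -/
/-!
Since `C(m, j) / ((j + 1)(j + 2)) = C(m + 2, j + 2) / ((m + 1)(m + 2))`, the expectation equals
`p⁻² (m + 1)⁻¹ (m + 2)⁻¹` times the probability that a `Bin(m + 2, p)` variable is at least `2`,
and that probability is at most `1`.
-/

open Finset

theorem Nat.choose_mul_add_one_mul_add_two (m j : ℕ) :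
    m.choose j * (m + 1) * (m + 2) = (m + 2).choose (j + 2) * (j + 1) * (j + 2) := by
  have h₁ := Nat.add_one_mul_choose_eq m j
  have h₂ := Nat.add_one_mul_choose_eq (m + 1) (j + 1)
  calc m.choose j * (m + 1) * (m + 2) = (m + 2) * ((m + 1) * m.choose j) := by ring
    _ = (m + 2) * (m + 1).choose (j + 1) * (j + 1) := by rw [h₁, mul_assoc]
    _ = (m + 2).choose (j + 2) * (j + 1) * (j + 2) := by rw [h₂]; ring

theorem choose_div_add_one_mul_add_two {K : Type*} [Field K] [CharZero K] (m j : ℕ) :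
    (m.choose j : K) / ((j + 1) * (j + 2)) = ((m + 2).choose (j + 2) : K) / ((m + 1) * (m + 2)) := by
  rw [div_eq_div_iff (by norm_cast) (by norm_cast)]
  rw [← mul_assoc, ← mul_assoc]
  exact_mod_cast Nat.choose_mul_add_one_mul_add_two m j

/-- Dropping the first `d` terms of the binomial expansion of `(x + y) ^ (m + d)`. -/
theorem sum_range_choose_add_mul_pow_le_add_pow {R : Type*} [CommSemiring R] [PartialOrder R]
    [IsOrderedRing R] {x y : R} (hx : 0 ≤ x) (hy : 0 ≤ y) (m d : ℕ) :
    ∑ j ∈ range (m + 1), ((m + d).choose (j + d) : R) * x ^ (j + d) * y ^ (m - j)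
      ≤ (x + y) ^ (m + d) := by
  set g : ℕ → R := fun k => x ^ k * y ^ (m + d - k) * (m + d).choose k
  have hshift : ∀ j, ((m + d).choose (j + d) : R) * x ^ (j + d) * y ^ (m - j) = g (d + j) := by
    intro j
    simp only [g, show m + d - (d + j) = m - j by omega, add_comm j d]
    ring
  calc ∑ j ∈ range (m + 1), ((m + d).choose (j + d) : R) * x ^ (j + d) * y ^ (m - j)
      = ∑ j ∈ range (m + 1), g (d + j) := sum_congr rfl fun j _ => hshift j
    _ ≤ ∑ k ∈ range d, g k + ∑ j ∈ range (m + 1), g (d + j) :=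
      le_add_of_nonneg_left (sum_nonneg fun k _ => by positivity)
    _ = ∑ k ∈ range (m + d + 1), g k := by rw [← sum_range_add, add_comm m d, add_assoc]
    _ = (x + y) ^ (m + d) := (add_pow x y (m + d)).symm

/-- For `X ~ Bin(m, p)` with `0 < p ≤ 1`,
`E[1/((X+1)(X+2))] ≤ 1/(p² (m+1)(m+2))`. -/
theorem binomial_expectation_inv_succ_sq (m : ℕ) (p : ℝ) (hp : 0 < p) (hp1 : p ≤ 1) :
    ∑ j ∈ Finset.range (m + 1),
      (m.choose j : ℝ) * p ^ j * (1 - p) ^ (m - j) * (1 / (((j : ℝ) + 1) * ((j : ℝ) + 2)))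
    ≤ 1 / (p ^ 2 * ((m : ℝ) + 1) * ((m : ℝ) + 2)) := by
  have hterm : ∀ j ∈ range (m + 1),
      (m.choose j : ℝ) * p ^ j * (1 - p) ^ (m - j) * (1 / (((j : ℝ) + 1) * ((j : ℝ) + 2)))
        = ((m + 2).choose (j + 2) : ℝ) * p ^ (j + 2) * (1 - p) ^ (m - j)
          / (p ^ 2 * ((m : ℝ) + 1) * ((m : ℝ) + 2)) := by
    intro j _
    have h := choose_div_add_one_mul_add_two (K := ℝ) m j
    field_simp at h ⊢
    linear_combination p ^ (j + 2) * (1 - p) ^ (m - j) * h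
  rw [sum_congr rfl hterm, ← sum_div]
  gcongr
  simpa using sum_range_choose_add_mul_pow_le_add_pow hp.le (sub_nonneg.2 hp1) m 2
end

section
/- If N ~ Poisson(λ) with λ > 0, then for every δ ∈ (0,1), with probability at least 1 - δ we have |N + 1 - λ| ≤ 6 √(N+1) · log(2/δ). -/
/-!
Both tails of `N` are controlled by Chernoff bounds: with the Poisson moment generating function
`E[exp (t N)] = exp (λ (exp t - 1))` and `exp t ≤ 1 + t + t ^ 2` for `|t| ≤ 1`, one gets
`P(N ≥ c) ≤ exp (-(c - λ) ^ 2 / (4 c))` for `c ≥ λ` and `P(N ≤ c) ≤ exp (-(λ - c) ^ 2 / (4 λ))`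
for `0 ≤ c ≤ λ`. The set of `N` violating the inequality from above (resp. below) is contained in
the tail cut at its least (resp. greatest) element `n`, and for that `n` the violation itself
makes the Chernoff exponent at least `log (2 / δ)`, so each side has probability at most `δ / 2`.
-/

open MeasureTheory ProbabilityTheory Real Set
open scoped NNReal Nat

namespace MeasureTheory

variable {μ : Measure ℕ} [IsFiniteMeasure μ] {s : Set ℕ} {ε : ℝ}

lemma measureReal_le_of_forall_measureReal_Ici_le (hε : 0 ≤ ε)
    (h : ∀ n ∈ s, μ.real (Ici n) ≤ ε) : μ.real s ≤ ε := by
  rcases s.eq_empty_or_nonempty with rfl | hs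
  · simpa using hε
  · exact (measureReal_mono fun _ ↦ Nat.sInf_le).trans (h _ (Nat.sInf_mem hs))

lemma measureReal_le_of_forall_measureReal_Iic_le (hε : 0 ≤ ε) (hbdd : BddAbove s)
    (h : ∀ n ∈ s, μ.real (Iic n) ≤ ε) : μ.real s ≤ ε := by
  rcases s.eq_empty_or_nonempty with rfl | hs
  · simpa using hε
  · exact (measureReal_mono fun _ hn ↦ le_csSup hbdd hn).trans (h _ (Nat.sSup_mem hs hbdd))

end MeasureTheory

lemma lt_and_four_mul_le_sq_of_mul_sqrt_lt_sub {L n y : ℝ} (hL : 2 / 3 ≤ L) (hn : 0 ≤ n)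
    (h : 6 * √(n + 1) * L < n + 1 - y) : y < n ∧ 4 * L * n ≤ (n - y) ^ 2 := by
  have hq : 1 ≤ √(n + 1) := one_le_sqrt.2 (by linarith)
  have hs : 4 ≤ n + 1 - y := by nlinarith
  have hsq : 36 * (n + 1) * L ^ 2 < (n + 1 - y) ^ 2 := by
    have := pow_lt_pow_left₀ h (by positivity) two_ne_zero
    rw [mul_pow, mul_pow, sq_sqrt (by linarith)] at this
    linarith
  refine ⟨by linarith, ?_⟩
  nlinarith [mul_le_mul (by linarith : 3 / 4 * (n + 1 - y) ≤ n - y)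
    (by linarith : 3 / 4 * (n + 1 - y) ≤ n - y) (by linarith) (by linarith)]

lemma le_and_four_mul_le_sq_of_mul_sqrt_lt_sub {L n y : ℝ} (hL : 1 / 3 ≤ L) (hn : 0 ≤ n)
    (h : 6 * √(n + 1) * L < y - (n + 1)) : n ≤ y ∧ 4 * L * y ≤ (y - n) ^ 2 := by
  have hq : 1 ≤ √(n + 1) := one_le_sqrt.2 (by linarith)
  have hs : 6 * L ≤ y - (n + 1) := by nlinarith
  have hsq : 36 * (n + 1) * L ^ 2 < (y - (n + 1)) ^ 2 := by
    have := pow_lt_pow_left₀ h (by positivity) two_ne_zero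
    rw [mul_pow, mul_pow, sq_sqrt (by linarith)] at this
    linarith
  refine ⟨by linarith, ?_⟩
  nlinarith [mul_le_mul_of_nonneg_left hs (by linarith : 0 ≤ y - (n + 1))]

namespace ProbabilityTheory

lemma tsum_ite_eq_poissonMeasure_real (r : ℝ≥0) (P : ℕ → Prop) [DecidablePred P] :
    ∑' n, (if P n then exp (-r) * r ^ n / n ! else 0) = Po(r).real {n | P n} := by
  rw [← integral_indicator_one .of_discrete, integral_poissonMeasure]
  congr with n
  by_cases h : P n <;> simp [h]

lemma mgf_poissonMeasure (r : ℝ≥0) (t : ℝ) :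
    mgf (fun n : ℕ ↦ (n : ℝ)) Po(r) t = exp (r * (exp t - 1)) := by
  have hterm : (fun n : ℕ ↦ (exp (-r) * r ^ n / n !) • exp (t * n)) =
      fun n ↦ exp (-r) * ((r * exp t) ^ n / n !) := by
    ext n
    rw [smul_eq_mul, mul_pow, ← exp_nat_mul, mul_comm (n : ℝ) t]
    ring
  rw [mgf, integral_poissonMeasure, hterm, tsum_mul_left,
    (NormedSpace.expSeries_div_hasSum_exp (_ : ℝ)).tsum_eq, ← exp_eq_exp_ℝ, ← exp_add]
  ring_nf

lemma integrable_exp_mul_poissonMeasure (r : ℝ≥0) (t : ℝ) :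
    Integrable (fun n : ℕ ↦ exp (t * n)) Po(r) :=
  .of_integral_ne_zero ((mgf_poissonMeasure r t).trans_ne (exp_pos _).ne')

lemma poissonMeasure_real_ge_le {r : ℝ≥0} {c : ℝ} (hrc : r ≤ c) (hc : 0 < c) :
    Po(r).real {n | c ≤ (n : ℝ)} ≤ exp (-(c - r) ^ 2 / (4 * c)) := by
  obtain ⟨t, ht0, ht1, hct⟩ : ∃ t : ℝ, 0 ≤ t ∧ t ≤ 1 ∧ c - r = 2 * c * t :=
    ⟨(c - r) / (2 * c), by positivity, by rw [div_le_one (by positivity)]; linarith [r.2],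
      by field_simp⟩
  have hexp : exp t ≤ 1 + t + t ^ 2 := by
    linarith [(abs_le.1 (abs_exp_sub_one_sub_id_le (abs_le.2 ⟨by linarith, ht1⟩))).2]
  refine (measure_ge_le_exp_mul_mgf c ht0 (integrable_exp_mul_poissonMeasure r t)).trans ?_
  rw [mgf_poissonMeasure, ← exp_add, exp_le_exp, hct,
    show -(2 * c * t) ^ 2 / (4 * c) = -(c * t ^ 2) by field_simp; ring]
  nlinarith [mul_le_mul_of_nonneg_left hexp r.2, mul_le_mul_of_nonneg_right hrc (sq_nonneg t)]

lemma poissonMeasure_real_le_le {r : ℝ≥0} {c : ℝ} (hr : 0 < r) (hc : 0 ≤ c) (hcr : c ≤ r) :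
    Po(r).real {n | (n : ℝ) ≤ c} ≤ exp (-(r - c) ^ 2 / (4 * r)) := by
  have hr' : (0 : ℝ) < r := hr
  obtain ⟨t, ht0, ht1, hrt⟩ : ∃ t : ℝ, 0 ≤ t ∧ t ≤ 1 ∧ r - c = 2 * r * t :=
    ⟨(r - c) / (2 * r), div_nonneg (by linarith) (by positivity),
      by rw [div_le_one (by positivity)]; linarith, by field_simp⟩
  have hexp : exp (-t) ≤ 1 - t + t ^ 2 := by
    have := abs_exp_sub_one_sub_id_le (x := -t) (abs_le.2 ⟨by linarith, by linarith⟩)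
    linarith [(abs_le.1 this).2, neg_sq t]
  refine (measure_le_le_exp_mul_mgf c (neg_nonpos.2 ht0)
    (integrable_exp_mul_poissonMeasure r (-t))).trans ?_
  rw [mgf_poissonMeasure, ← exp_add, exp_le_exp, hrt,
    show -(2 * r * t) ^ 2 / (4 * r) = -(r * t ^ 2) by field_simp; ring]
  nlinarith [mul_le_mul_of_nonneg_left hexp hr'.le]

lemma poissonMeasure_real_upper_deviation_le (r : ℝ≥0) {L : ℝ} (hL : 2 / 3 ≤ L) :
    Po(r).real {n : ℕ | 6 * √(n + 1) * L < n + 1 - r} ≤ exp (-L) := by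
  refine measureReal_le_of_forall_measureReal_Ici_le (exp_pos _).le fun n hn ↦ ?_
  obtain ⟨hrn, hdev⟩ := lt_and_four_mul_le_sq_of_mul_sqrt_lt_sub hL n.cast_nonneg hn
  have hn0 : (0 : ℝ) < n := r.2.trans_lt hrn
  have htail := poissonMeasure_real_ge_le hrn.le hn0
  simp only [Nat.cast_le] at htail
  refine htail.trans (exp_le_exp.2 ?_)
  rw [neg_div, neg_le_neg_iff, le_div_iff₀ (by positivity)]
  linarith

lemma poissonMeasure_real_lower_deviation_le {r : ℝ≥0} (hr : 0 < r) {L : ℝ} (hL : 1 / 3 ≤ L) :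
    Po(r).real {n : ℕ | 6 * √(n + 1) * L < r - (n + 1)} ≤ exp (-L) := by
  have hdev {n : ℕ} (hn : 6 * √(n + 1) * L < r - (n + 1)) :=
    le_and_four_mul_le_sq_of_mul_sqrt_lt_sub hL n.cast_nonneg hn
  refine measureReal_le_of_forall_measureReal_Iic_le (exp_pos _).le
    ⟨⌊(r : ℝ)⌋₊, fun n hn ↦ Nat.le_floor (hdev hn).1⟩ fun n hn ↦ ?_
  have htail := poissonMeasure_real_le_le hr n.cast_nonneg (hdev hn).1
  simp only [Nat.cast_le] at htail
  refine htail.trans (exp_le_exp.2 ?_)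
  rw [neg_div, neg_le_neg_iff, le_div_iff₀ (by positivity)]
  linarith [(hdev hn).2]

end ProbabilityTheory

/-- If `N ~ Poisson(λ)` with `λ > 0`, then for every `δ ∈ (0,1)`, with probability at
least `1 - δ` we have `|N + 1 - λ| ≤ 6 √(N+1) log(2/δ)`. -/
theorem poisson_concentration (lam δ : ℝ) (hlam : 0 < lam) (hδ : δ ∈ Set.Ioo (0 : ℝ) 1) :
    1 - δ ≤ ∑' N : ℕ,
      if |(N : ℝ) + 1 - lam| ≤ 6 * Real.sqrt ((N : ℝ) + 1) * Real.log (2 / δ)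
      then Real.exp (-lam) * lam ^ N / N.factorial else 0 := by
  obtain ⟨hδ0, hδ1⟩ := hδ
  set L := Real.log (2 / δ)
  have hL : 2 / 3 ≤ L := (by norm_num : (2 / 3 : ℝ) ≤ 0.6931471803).trans <|
    log_two_gt_d9.le.trans (log_le_log two_pos (by rw [le_div_iff₀ hδ0]; linarith))
  have hexpL : exp (-L) = δ / 2 := by rw [exp_neg, exp_log (by positivity), inv_div]
  set r := lam.toNNReal
  have hr : (r : ℝ) = lam := coe_toNNReal _ hlam.le
  have hsum := tsum_ite_eq_poissonMeasure_real r fun n ↦ |(n : ℝ) + 1 - lam| ≤ 6 * √(n + 1) * L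
  have hU := poissonMeasure_real_upper_deviation_le r hL
  have hD := poissonMeasure_real_lower_deviation_le (toNNReal_pos.2 hlam) (L := L) (by linarith)
  rw [hr] at hsum hU hD
  set G := {n : ℕ | |(n : ℝ) + 1 - lam| ≤ 6 * √(n + 1) * L}
  have hGc : Gᶜ ⊆ {n : ℕ | 6 * √(n + 1) * L < n + 1 - lam} ∪
      {n : ℕ | 6 * √(n + 1) * L < lam - (n + 1)} := fun n hn ↦ by
    rwa [mem_compl_iff, mem_ofPred_eq, not_le, lt_abs, neg_sub] at hn
  have hcompl := probReal_compl_eq_one_sub (μ := Po(r)) (MeasurableSet.of_discrete (s := G))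
  rw [hsum]
  linarith [(measureReal_mono (μ := Po(r)) hGc).trans (measureReal_union_le _ _)]
end

section
/- For every real p_i ∈ (0,1], positive integer n, and nonnegative integer N'_i, one has p_i · log(n p_i / (N'_i + 1)) + (N'_i + 1)/n − p_i ≤ (n p_i − (N'_i + 1))^2 / (n (N'_i + 1)). -/
theorem mul_log_div_add_div_sub_le_sq_div {p x c : ℝ} (hp : 0 < p) (hx : 0 < x) (hc : 0 < c) :
    p * Real.log (x * p / c) + c / x - p ≤ (x * p - c) ^ 2 / (x * c) :=
  calc p * Real.log (x * p / c) + c / x - p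
      ≤ p * (x * p / c - 1) + c / x - p := by
        gcongr
        exact Real.log_le_sub_one_of_pos (by positivity)
    _ = (x * p - c) ^ 2 / (x * c) := by
        field_simp
        ring

/-- For `p ∈ (0,1]`, `n ≥ 1`, `N' ≥ 0`,
`p log(n p/(N'+1)) + (N'+1)/n − p ≤ (n p − (N'+1))² / (n (N'+1))`. -/
theorem kl_term_upper_bound (p : ℝ) (hp : p ∈ Set.Ioc (0 : ℝ) 1) (n : ℕ) (hn : 0 < n)
    (N' : ℕ) :
    p * Real.log ((n : ℝ) * p / ((N' : ℝ) + 1)) + ((N' : ℝ) + 1) / (n : ℝ) - p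
      ≤ ((n : ℝ) * p - ((N' : ℝ) + 1)) ^ 2 / ((n : ℝ) * ((N' : ℝ) + 1)) :=
  mul_log_div_add_div_sub_le_sq_div hp.1 (Nat.cast_pos.mpr hn) N'.cast_add_one_pos
end

section
/- Let N_1 ~ Binomial(n_0, 1/2) for an integer n_0 ≥ 0. Then Var(log(N_1 (n_0 − N_1) + n_0 + 1)) ≥ 2 n_0 (n_0 − 1) / (n_0 + 2)^4. -/
open Finset Real

/-! Writing `Y = N₁(n − N₁) + n + 1` as `(n + 2)² / 4 − (N₁ − n/2)²`, the variance of `Y` is that of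
`(N₁ − n/2)²`, namely `μ₄ − μ₂² = n(n − 1)/8` by the central moments of `Bin(n, 1/2)`. Since `log`
has slope at least `1/b` on `(0, b]` with `b = (n + 2)²/4`, `|log y − log z| ≥ |y − z| / b` there,
and the representation `Var X = ½ 𝔼 (X − X')²` over an independent copy `X'` gives
`Var (log Y) ≥ Var Y / b²`. -/

section WeightedVar

variable {ι : Type*} (s : Finset ι) (w : ι → ℝ)

def weightedVar (f : ι → ℝ) : ℝ :=
  ∑ i ∈ s, w i * f i ^ 2 - (∑ i ∈ s, w i * f i) ^ 2

variable {s w}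

theorem weightedVar_eq_half_sum_sum (hw : ∑ i ∈ s, w i = 1) (f : ι → ℝ) :
    weightedVar s w f = 1 / 2 * ∑ i ∈ s, ∑ j ∈ s, w i * w j * (f i - f j) ^ 2 := by
  have expand : ∀ i j, w i * w j * (f i - f j) ^ 2
      = w i * f i ^ 2 * w j + w i * (w j * f j ^ 2) - 2 * ((w i * f i) * (w j * f j)) :=
    fun i j ↦ by ring
  simp_rw [expand, sum_sub_distrib, sum_add_distrib, ← mul_sum, ← sum_mul, hw]
  rw [weightedVar]
  ring

theorem weightedVar_const_sub (hw : ∑ i ∈ s, w i = 1) (c : ℝ) (f : ι → ℝ) :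
    weightedVar s w (fun i ↦ c - f i) = weightedVar s w f := by
  simp_rw [weightedVar_eq_half_sum_sum hw]
  congr 1
  exact sum_congr rfl fun i _ ↦ sum_congr rfl fun j _ ↦ by ring

theorem weightedVar_div_const (f : ι → ℝ) (c : ℝ) :
    weightedVar s w (fun i ↦ f i / c) = weightedVar s w f / c ^ 2 := by
  simp_rw [weightedVar, div_pow, mul_div_assoc', ← sum_div]
  ring

theorem weightedVar_le_weightedVar_of_sq_sub_le (hw : ∑ i ∈ s, w i = 1)
    (hw₀ : ∀ i ∈ s, 0 ≤ w i) {f g : ι → ℝ}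
    (h : ∀ i ∈ s, ∀ j ∈ s, (f i - f j) ^ 2 ≤ (g i - g j) ^ 2) :
    weightedVar s w f ≤ weightedVar s w g := by
  rw [weightedVar_eq_half_sum_sum hw, weightedVar_eq_half_sum_sum hw]
  gcongr 1 / 2 * ∑ i ∈ s, ∑ j ∈ s, _ * ?_ with i hi j hj
  · exact mul_nonneg (hw₀ i hi) (hw₀ j hj)
  · exact h i hi j hj

end WeightedVar

theorem sub_div_le_log_sub_log {b y z : ℝ} (hz : 0 < z) (hzy : z ≤ y) (hyb : y ≤ b) :
    (y - z) / b ≤ log y - log z := by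
  have hy : 0 < y := hz.trans_le hzy
  calc (y - z) / b ≤ (y - z) / y := div_le_div_of_nonneg_left (by linarith) hy hyb
    _ = 1 - (y / z)⁻¹ := by field_simp
    _ ≤ log (y / z) := one_sub_inv_le_log_of_pos (by positivity)
    _ = log y - log z := log_div hy.ne' hz.ne'

theorem sq_sub_div_le_sq_log_sub_log {b y z : ℝ} (hy : 0 < y) (hz : 0 < z) (hyb : y ≤ b)
    (hzb : z ≤ b) : ((y - z) / b) ^ 2 ≤ (log y - log z) ^ 2 := by
  rcases le_total z y with hzy | hyz
  · have hb : 0 < b := hy.trans_le hyb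
    exact pow_le_pow_left₀ (div_nonneg (by linarith) hb.le) (sub_div_le_log_sub_log hz hzy hyb) 2
  · have hb : 0 < b := hz.trans_le hzb
    have := pow_le_pow_left₀ (div_nonneg (by linarith) hb.le) (sub_div_le_log_sub_log hy hyz hzb) 2
    rw [← neg_sub y z, neg_div, neg_sq, ← neg_sub (log y), neg_sq] at this
    exact this

theorem weightedVar_div_sq_le_weightedVar_log {ι : Type*} {s : Finset ι} {w f : ι → ℝ} {b : ℝ}
    (hw : ∑ i ∈ s, w i = 1) (hw₀ : ∀ i ∈ s, 0 ≤ w i) (hf₀ : ∀ i ∈ s, 0 < f i)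
    (hfb : ∀ i ∈ s, f i ≤ b) :
    weightedVar s w f / b ^ 2 ≤ weightedVar s w (fun i ↦ log (f i)) := by
  rw [← weightedVar_div_const]
  refine weightedVar_le_weightedVar_of_sq_sub_le hw hw₀ fun i hi j hj ↦ ?_
  rw [← sub_div]
  exact sq_sub_div_le_sq_log_sub_log (hf₀ i hi) (hf₀ j hj) (hfb i hi) (hfb j hj)

noncomputable def binomialHalf (n j : ℕ) : ℝ := n.choose j * (1 / 2) ^ n

theorem binomialHalf_nonneg (n j : ℕ) : 0 ≤ binomialHalf n j := by
  unfold binomialHalf; positivity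

theorem sum_binomialHalf (n : ℕ) : ∑ j ∈ range (n + 1), binomialHalf n j = 1 := by
  simp_rw [binomialHalf, ← sum_mul, ← Nat.cast_sum, Nat.sum_range_choose]
  push_cast
  rw [← mul_pow]
  norm_num

theorem sum_binomialHalf_succ_mul (n : ℕ) (F : ℕ → ℝ) :
    ∑ j ∈ range (n + 2), binomialHalf (n + 1) j * F j
      = ∑ j ∈ range (n + 1), binomialHalf n j * ((F j + F (j + 1)) / 2) := by
  have pascal := sum_choose_succ_mul (R := ℝ) (fun j _ ↦ F j) n
  simp_rw [binomialHalf, pow_succ, mul_right_comm _ _ (F _)]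
  rw [← sum_mul, pascal, ← sum_add_distrib, sum_mul]
  exact sum_congr rfl fun j _ ↦ by ring

theorem sum_binomialHalf_mul_sub_half_sq (n : ℕ) :
    ∑ j ∈ range (n + 1), binomialHalf n j * ((j : ℝ) - n / 2) ^ 2 = (n : ℝ) / 4 := by
  induction n with
  | zero => simp [binomialHalf]
  | succ n ih =>
    refine (sum_binomialHalf_succ_mul n _).trans ?_
    calc _ = ∑ j ∈ range (n + 1), binomialHalf n j * (((j : ℝ) - n / 2) ^ 2 + 1 / 4) :=
          sum_congr rfl fun j _ ↦ by push_cast; ring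
      _ = _ := by
          simp_rw [mul_add, sum_add_distrib, ← sum_mul, ih, sum_binomialHalf]
          push_cast; ring

theorem sum_binomialHalf_mul_sub_half_pow_four (n : ℕ) :
    ∑ j ∈ range (n + 1), binomialHalf n j * ((j : ℝ) - n / 2) ^ 4
      = (n : ℝ) * (3 * n - 2) / 16 := by
  induction n with
  | zero => simp [binomialHalf]
  | succ n ih =>
    refine (sum_binomialHalf_succ_mul n _).trans ?_
    calc _ = ∑ j ∈ range (n + 1), binomialHalf n j *
            (((j : ℝ) - n / 2) ^ 4 + 3 / 2 * ((j : ℝ) - n / 2) ^ 2 + 1 / 16) :=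
          sum_congr rfl fun j _ ↦ by push_cast; ring
      _ = _ := by
          simp_rw [mul_add, sum_add_distrib, mul_left_comm _ (3 / 2 : ℝ), ← mul_sum, ← sum_mul,
            ih, sum_binomialHalf_mul_sub_half_sq, sum_binomialHalf]
          push_cast; ring

theorem weightedVar_binomialHalf_sub_half_sq (n : ℕ) :
    weightedVar (range (n + 1)) (binomialHalf n) (fun j ↦ ((j : ℝ) - n / 2) ^ 2)
      = n * (n - 1) / 8 := by
  simp_rw [weightedVar, ← pow_mul, sum_binomialHalf_mul_sub_half_pow_four,
    sum_binomialHalf_mul_sub_half_sq]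
  ring

/-- If `N₁ ~ Binomial(n₀, 1/2)`, then
`Var(log(N₁(n₀ − N₁) + n₀ + 1)) ≥ 2 n₀ (n₀ − 1) / (n₀ + 2)⁴`. -/
theorem variance_log_binomial_prod_ge (n₀ : ℕ) :
    2 * (n₀ : ℝ) * ((n₀ : ℝ) - 1) / ((n₀ : ℝ) + 2) ^ 4
    ≤ (∑ j ∈ Finset.range (n₀ + 1),
        (n₀.choose j : ℝ) * (1 / 2) ^ n₀
          * (Real.log ((j : ℝ) * ((n₀ : ℝ) - j) + (n₀ : ℝ) + 1)) ^ 2)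
      - (∑ j ∈ Finset.range (n₀ + 1),
        (n₀.choose j : ℝ) * (1 / 2) ^ n₀
          * Real.log ((j : ℝ) * ((n₀ : ℝ) - j) + (n₀ : ℝ) + 1)) ^ 2 := by
  set b : ℝ := ((n₀ : ℝ) + 2) ^ 2 / 4
  have hY : (fun j : ℕ ↦ (j : ℝ) * (n₀ - j) + n₀ + 1)
      = fun j : ℕ ↦ b - ((j : ℝ) - n₀ / 2) ^ 2 := by
    funext j; ring
  have hVar : weightedVar (range (n₀ + 1)) (binomialHalf n₀)
      (fun j ↦ (j : ℝ) * (n₀ - j) + n₀ + 1) = n₀ * (n₀ - 1) / 8 := by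
    rw [hY, weightedVar_const_sub (sum_binomialHalf n₀), weightedVar_binomialHalf_sub_half_sq]
  have hpos (j : ℕ) (hj : j ∈ range (n₀ + 1)) : 0 < (j : ℝ) * (n₀ - j) + n₀ + 1 := by
    have : (j : ℝ) ≤ n₀ := by exact_mod_cast mem_range_succ_iff.mp hj
    positivity
  have hle (j : ℕ) : (j : ℝ) * (n₀ - j) + n₀ + 1 ≤ b := by
    rw [congrFun hY j]; linarith [sq_nonneg ((j : ℝ) - n₀ / 2)]
  calc 2 * (n₀ : ℝ) * (n₀ - 1) / (n₀ + 2) ^ 4 = n₀ * (n₀ - 1) / 8 / b ^ 2 := by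
        simp only [b]; field_simp; ring
    _ ≤ _ := hVar ▸ weightedVar_div_sq_le_weightedVar_log (sum_binomialHalf n₀)
        (fun j _ ↦ binomialHalf_nonneg n₀ j) hpos fun j _ ↦ hle j
end

section
/- Let p be the uniform distribution over [k] with k even, and let p̂¹ be the Laplace add-1 estimator computed from n ≥ 10k i.i.d. samples of p. Then Var(KL(p ‖ p̂¹)) ≥ k/(32 n^2). -/
/-!
Write `k = 2K` and view the alphabet as `K` pairs, `Fin K × Bool`. Let `T` flip the `Bool`
component of the samples at a set `P` of `⌊n/2⌋` positions. `T` preserves the uniform measure,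
so `Var F ≥ E (F - F ∘ T)² / 4`. Since `F = const - (1/k) ∑ₐ log (Nₐ + 1)`, we get
`k (F ∘ T - F) = ∑ⱼ Dⱼ` with `Dⱼ = log ((Sⱼ + 2)² - (Xⱼ + Yⱼ)²) - log ((Sⱼ + 2)² - (Yⱼ - Xⱼ)²)`:
here `Sⱼ` is the number of samples in pair `j`, `Xⱼ` and `Yⱼ` are their signed counts (`+1` for
`true`, `-1` for `false`) inside and outside `P`, and
`(Sⱼ + 2)² - (Xⱼ + Yⱼ)² = 4 (N_{j,true} + 1) (N_{j,false} + 1)`.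

Flipping pair `l` on `P` alone negates `D_l` and fixes the other `Dⱼ`, so the `Dⱼ` are
orthogonal; and `|log x - log y| ≥ |x - y| / max x y` gives `Dⱼ² ≥ 16 Xⱼ² Yⱼ² / (Sⱼ + 2)⁴`.
Flipping a single position negates one sign and fixes `Sⱼ`, so
`E [Xⱼ² Yⱼ² / (Sⱼ + 2)⁴] = ∑_{t ∈ P, s ∉ P} E [1ₜ 1ₛ / (Sⱼ + 2)⁴]`, where `1ₜ` says that the
sample at `t` lies in pair `j`. Jensen's inequality for `x ↦ x⁻⁴`, with the first moment of `Sⱼ`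
given `1ₜ 1ₛ = 1`, bounds each term below by `k² / (4 (n + 2k - 2)⁴)`; `n ≥ 10k` does the rest.
-/

open MeasureTheory ProbabilityTheory Finset

lemma sum_eq_zero_of_comp_perm_eq_neg {Ω : Type*} [Fintype Ω] (σ : Equiv.Perm Ω) {f : Ω → ℝ}
    (hf : ∀ ω, f (σ ω) = -f ω) : ∑ ω, f ω = 0 := by
  have h := Equiv.sum_comp σ f
  simp only [hf, sum_neg_distrib] at h
  linarith

lemma sum_mul_sq_sum_of_orthogonal {Ω γ : Type*} [Fintype Ω] (s : Finset γ) (f : γ → Ω → ℝ)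
    (h : Ω → ℝ) (horth : ∀ i ∈ s, ∀ i' ∈ s, i ≠ i' → ∑ ω, h ω * (f i ω * f i' ω) = 0) :
    ∑ ω, h ω * (∑ i ∈ s, f i ω) ^ 2 = ∑ i ∈ s, ∑ ω, h ω * f i ω ^ 2 := by
  have hexpand : ∀ ω, h ω * (∑ i ∈ s, f i ω) ^ 2 = ∑ i ∈ s, ∑ i' ∈ s, h ω * (f i ω * f i' ω) :=
    fun ω => by rw [sq, sum_mul_sum, mul_sum]; simp only [mul_sum]
  rw [sum_congr rfl fun ω _ => hexpand ω, sum_comm]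
  refine sum_congr rfl fun i hi => ?_
  rw [sum_comm, sum_eq_single_of_mem i hi fun i' hi' hne => horth i hi i' hi' hne.symm]
  simp only [sq]

lemma five_mul_sub_four_mul_div_pow_five_le {m x : ℝ} (hm : 0 < m) (hx : 0 < x) :
    (5 * m - 4 * x) / m ^ 5 ≤ 1 / x ^ 4 := by
  rw [div_le_div_iff₀ (by positivity) (by positivity)]
  nlinarith [mul_nonneg (sq_nonneg (m - x))
    (by positivity : 0 ≤ m ^ 3 + 2 * m ^ 2 * x + 3 * m * x ^ 2 + 4 * x ^ 3)]

lemma sum_pow_five_div_le_sum_div_pow_four {γ : Type*} (s : Finset γ) {w x : γ → ℝ}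
    (hw : ∀ i ∈ s, 0 ≤ w i) (hx : ∀ i ∈ s, 0 < x i) :
    (∑ i ∈ s, w i) ^ 5 / (∑ i ∈ s, w i * x i) ^ 4 ≤ ∑ i ∈ s, w i / x i ^ 4 := by
  set W := ∑ i ∈ s, w i
  set M := ∑ i ∈ s, w i * x i
  have hrhs : 0 ≤ ∑ i ∈ s, w i / x i ^ 4 :=
    sum_nonneg fun i hi => div_nonneg (hw i hi) (pow_nonneg (hx i hi).le 4)
  have hW0 : 0 ≤ W := sum_nonneg hw
  have hM0 : 0 ≤ M := sum_nonneg fun i hi => mul_nonneg (hw i hi) (hx i hi).le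
  rcases hW0.eq_or_lt with hW | hW
  · rw [← hW]; simpa using hrhs
  rcases hM0.eq_or_lt with hM | hM
  · rw [← hM]; simpa using hrhs
  -- tangent line of `x ↦ x⁻⁴` at the `w`-weighted mean of `x`
  set m := M / W
  have hm : 0 < m := div_pos hM hW
  calc W ^ 5 / M ^ 4 = 5 * m / m ^ 5 * W - 4 / m ^ 5 * M := by simp only [m]; field_simp; ring
    _ = ∑ i ∈ s, w i * ((5 * m - 4 * x i) / m ^ 5) := by
        rw [mul_sum, mul_sum, ← sum_sub_distrib]
        exact sum_congr rfl fun i _ => by ring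
    _ ≤ ∑ i ∈ s, w i * (1 / x i ^ 4) := sum_le_sum fun i hi =>
        mul_le_mul_of_nonneg_left (five_mul_sub_four_mul_div_pow_five_le hm (hx i hi)) (hw i hi)
    _ = ∑ i ∈ s, w i / x i ^ 4 := by simp only [mul_one_div]

lemma sq_sub_div_le_sq_log_sub_log_s9 {x y B : ℝ} (hx : 0 < x) (hy : 0 < y) (hxB : x ≤ B)
    (hyB : y ≤ B) : ((x - y) / B) ^ 2 ≤ (Real.log x - Real.log y) ^ 2 := by
  wlog hyx : y ≤ x generalizing x y
  · convert this hy hx hyB hxB (le_of_not_ge hyx) using 1 <;> ring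
  have hxy : (x - y) / B ≤ Real.log x - Real.log y :=
    calc (x - y) / B ≤ (x - y) / x := div_le_div_of_nonneg_left (by linarith) hx hxB
      _ = 1 - (x / y)⁻¹ := by field_simp
      _ ≤ Real.log (x / y) := Real.one_sub_inv_le_log_of_pos (div_pos hx hy)
      _ = Real.log x - Real.log y := Real.log_div hx.ne' hy.ne'
  exact pow_le_pow_left₀ (div_nonneg (by linarith) (hx.le.trans hxB)) hxy 2

lemma sum_sq_sub_comp_perm_le {Ω : Type*} [Fintype Ω] (f : Ω → ℝ) (T : Equiv.Perm Ω) (a : ℝ) :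
    ∑ ω, (f ω - f (T ω)) ^ 2 ≤ 4 * ∑ ω, (f ω - a) ^ 2 := by
  have hT : ∑ ω, (f (T ω) - a) ^ 2 = ∑ ω, (f ω - a) ^ 2 := Equiv.sum_comp T fun ω => (f ω - a) ^ 2
  calc ∑ ω, (f ω - f (T ω)) ^ 2 ≤ ∑ ω, (2 * (f ω - a) ^ 2 + 2 * (f (T ω) - a) ^ 2) :=
        sum_le_sum fun ω _ => by nlinarith [sq_nonneg (f ω + f (T ω) - 2 * a)]
    _ = 4 * ∑ ω, (f ω - a) ^ 2 := by rw [sum_add_distrib, ← mul_sum, ← mul_sum, hT]; ring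

section Uniform

variable {Ω : Type*} [Fintype Ω] [MeasurableSpace Ω] [MeasurableSingletonClass Ω]

lemma integral_uniform (g : Ω → ℝ) :
    ∫ ω, g ω ∂((Fintype.card Ω : ENNReal)⁻¹ • Measure.count) = (∑ ω, g ω) / Fintype.card Ω := by
  rw [integral_smul_measure, integral_count, ENNReal.toReal_inv, ENNReal.toReal_natCast,
    smul_eq_mul, inv_mul_eq_div]

lemma sum_sq_sub_comp_perm_div_le_variance (f : Ω → ℝ) (T : Equiv.Perm Ω) :
    (∑ ω, (f ω - f (T ω)) ^ 2) / (4 * Fintype.card Ω) ≤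
      variance f ((Fintype.card Ω : ENNReal)⁻¹ • Measure.count) := by
  rw [variance_eq_integral (measurable_of_finite f).aemeasurable, integral_uniform, ← div_div]
  exact div_le_div_of_nonneg_right ((div_le_iff₀' four_pos).2 (sum_sq_sub_comp_perm_le f T _))
    (Nat.cast_nonneg _)

end Uniform

lemma sum_mul_log_laplace_sub {α : Type*} [Fintype α] {k c : ℝ} (hk : 0 < k) (hc : 0 < c)
    (u v : α → ℕ) :
    ∑ a, 1 / k * Real.log (1 / k / ((u a + 1) / c)) -
        ∑ a, 1 / k * Real.log (1 / k / ((v a + 1) / c)) =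
      (∑ a, Real.log (v a + 1) - ∑ a, Real.log (u a + 1)) / k := by
  have hlog : ∀ m : ℕ, Real.log (1 / k / ((m + 1) / c)) = Real.log (c / k) - Real.log (m + 1) :=
    fun m => by
      rw [← Real.log_div (by positivity) (by positivity)]
      congr 1
      field_simp
  simp only [hlog, ← mul_sum, sum_sub_distrib]
  field_simp
  ring

lemma two_mul_div_le_mul_div_pow_four {K n : ℕ} (hK : 0 < K) (hn : 20 * K ≤ n) :
    (2 * K : ℝ) / (32 * n ^ 2) ≤ K * ((n / 2 : ℕ) * (n - n / 2 : ℕ)) / (4 * K + n - 2) ^ 4 := by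
  have hp : (n : ℝ) ≤ 2 * (n / 2 : ℕ) + 1 := by exact_mod_cast (by omega : n ≤ 2 * (n / 2) + 1)
  have hq : (n : ℝ) ≤ 2 * (n - n / 2 : ℕ) := by exact_mod_cast (by omega : n ≤ 2 * (n - n / 2))
  set p : ℝ := ((n / 2 : ℕ) : ℝ)
  set q : ℝ := ((n - n / 2 : ℕ) : ℝ)
  have hK' : (1 : ℝ) ≤ K := by exact_mod_cast hK
  have hn' : (20 : ℝ) * K ≤ n := by exact_mod_cast hn
  have hD : 0 < (4 * K + n - 2 : ℝ) := by linarith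
  have hD4 : (4 * K + n - 2 : ℝ) ^ 4 ≤ (6 / 5 * n) ^ 4 := pow_le_pow_left₀ hD.le (by linarith) 4
  have hpq : (n : ℝ) * (n - 1) ≤ 4 * (p * q) := by nlinarith
  -- `2592 / 625 = 2 (6 / 5) ^ 4`
  have hpos : 0 ≤ (K : ℝ) * n ^ 3 * ((8 - 2592 / 625) * n - 8) :=
    mul_nonneg (by positivity) (by linarith)
  rw [div_le_div_iff₀ (by nlinarith) (by positivity)]
  calc 2 * K * (4 * K + n - 2 : ℝ) ^ 4 ≤ 2 * K * (6 / 5 * n) ^ 4 :=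
        mul_le_mul_of_nonneg_left hD4 (by positivity)
    _ ≤ 8 * K * n ^ 2 * (n * (n - 1)) := by linear_combination hpos
    _ ≤ 8 * K * n ^ 2 * (4 * (p * q)) := mul_le_mul_of_nonneg_left hpq (by positivity)
    _ = K * (p * q) * (32 * n ^ 2) := by ring

namespace LaplaceKL

section SymbolCount

variable {ι α : Type*} [Fintype ι] [Fintype α] [DecidableEq α]

def symbolCount (ω : ι → α) (a : α) : ℕ := #{t | ω t = a}

noncomputable def logCountSum (ω : ι → α) : ℝ := ∑ a, Real.log (symbolCount ω a + 1)

lemma logCountSum_comp_equiv {α' : Type*} [Fintype α'] [DecidableEq α'] (e : α ≃ α')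
    (ω : ι → α) : logCountSum (fun t => e (ω t)) = logCountSum ω := by
  rw [logCountSum, ← e.sum_comp]
  refine sum_congr rfl fun a _ => ?_
  simp only [symbolCount, e.apply_eq_iff_eq]

end SymbolCount

variable {ι β : Type*} [DecidableEq β]

def pairInd (j : β) (a : β × Bool) : ℝ := if a.1 = j then 1 else 0

def pairSign (j : β) (a : β × Bool) : ℝ := if a.1 = j then (if a.2 then 1 else -1) else 0

lemma pairInd_nonneg (j : β) (a : β × Bool) : 0 ≤ pairInd j a := by
  unfold pairInd; split_ifs <;> norm_num

lemma pairInd_mul_self (j : β) (a : β × Bool) : pairInd j a * pairInd j a = pairInd j a := by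
  unfold pairInd; split_ifs <;> norm_num

lemma sq_pairSign (j : β) (a : β × Bool) : pairSign j a ^ 2 = pairInd j a := by
  unfold pairSign pairInd; split_ifs <;> norm_num

lemma abs_pairSign (j : β) (a : β × Bool) : |pairSign j a| = pairInd j a := by
  unfold pairSign pairInd; split_ifs <;> norm_num

def signSum (j : β) (s : Finset ι) (ω : ι → β × Bool) : ℝ := ∑ t ∈ s, pairSign j (ω t)

section PairCount

variable [Fintype ι]

def pairCount (j : β) (ω : ι → β × Bool) : ℝ := ∑ t, pairInd j (ω t)

lemma pairCount_nonneg (j : β) (ω : ι → β × Bool) : 0 ≤ pairCount j ω :=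
  sum_nonneg fun t _ => pairInd_nonneg j (ω t)

lemma symbolCount_eq (j : β) (b : Bool) (ω : ι → β × Bool) :
    (symbolCount ω (j, b) : ℝ) = (pairCount j ω + (if b then 1 else -1) * signSum j univ ω) / 2 := by
  rw [symbolCount, natCast_card_filter, pairCount, signSum, mul_sum, ← sum_add_distrib, sum_div]
  refine sum_congr rfl fun t _ => ?_
  unfold pairInd pairSign
  obtain ⟨i, c⟩ := ω t
  by_cases hi : i = j <;> cases b <;> cases c <;> simp [hi]

lemma four_mul_symbolCount_add_one_mul (j : β) (ω : ι → β × Bool) :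
    4 * (((symbolCount ω (j, true) : ℝ) + 1) * ((symbolCount ω (j, false) : ℝ) + 1)) =
      (pairCount j ω + 2) ^ 2 - signSum j univ ω ^ 2 := by
  rw [symbolCount_eq, symbolCount_eq]; simp only [Bool.false_eq_true, ↓reduceIte]; ring

lemma logCountSum_eq [Fintype β] (ω : ι → β × Bool) :
    logCountSum ω =
      ∑ j, (Real.log ((pairCount j ω + 2) ^ 2 - signSum j univ ω ^ 2) - Real.log 4) := by
  rw [logCountSum, Fintype.sum_prod_type]
  refine sum_congr rfl fun j _ => ?_
  rw [Fintype.sum_bool, ← four_mul_symbolCount_add_one_mul,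
    Real.log_mul (by norm_num) (by positivity), Real.log_mul (by positivity) (by positivity)]
  ring

end PairCount

variable [DecidableEq ι]

def flipCells (C : Finset (ι × β)) (ω : ι → β × Bool) : ι → β × Bool :=
  fun t => if (t, (ω t).1) ∈ C then ((ω t).1, !(ω t).2) else ω t

lemma fst_flipCells (C : Finset (ι × β)) (ω : ι → β × Bool) (t : ι) :
    (flipCells C ω t).1 = (ω t).1 := by
  unfold flipCells; split_ifs <;> rfl

lemma flipCells_involutive (C : Finset (ι × β)) : Function.Involutive (flipCells C) := by
  intro ω; funext t
  have h := fst_flipCells C ω t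
  unfold flipCells at h ⊢
  split_ifs at h ⊢ <;> simp_all

lemma pairInd_flipCells (C : Finset (ι × β)) (ω : ι → β × Bool) (j : β) (t : ι) :
    pairInd j (flipCells C ω t) = pairInd j (ω t) := by
  simp only [pairInd, fst_flipCells]

lemma pairSign_flipCells (C : Finset (ι × β)) (ω : ι → β × Bool) (j : β) (t : ι) :
    pairSign j (flipCells C ω t) = if (t, j) ∈ C then -pairSign j (ω t) else pairSign j (ω t) := by
  unfold pairSign flipCells
  by_cases hj : (ω t).1 = j
  · subst hj; split_ifs <;> simp_all
  · split_ifs <;> simp_all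

lemma signSum_flipCells_of_forall_notMem {C : Finset (ι × β)} {j : β} {s : Finset ι}
    (h : ∀ t ∈ s, (t, j) ∉ C) (ω : ι → β × Bool) :
    signSum j s (flipCells C ω) = signSum j s ω :=
  sum_congr rfl fun t ht => by rw [pairSign_flipCells, if_neg (h t ht)]

lemma signSum_flipCells_of_forall_mem {C : Finset (ι × β)} {j : β} {s : Finset ι}
    (h : ∀ t ∈ s, (t, j) ∈ C) (ω : ι → β × Bool) :
    signSum j s (flipCells C ω) = -signSum j s ω := by
  rw [signSum, signSum, ← sum_neg_distrib]
  exact sum_congr rfl fun t ht => by rw [pairSign_flipCells, if_pos (h t ht)]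

variable [Fintype ι]

lemma pairCount_flipCells (C : Finset (ι × β)) (ω : ι → β × Bool) (j : β) :
    pairCount j (flipCells C ω) = pairCount j ω := by
  simp only [pairCount, pairInd_flipCells]

lemma abs_signSum_add_abs_signSum_compl_le (j : β) (s : Finset ι) (ω : ι → β × Bool) :
    |signSum j s ω| + |signSum j sᶜ ω| ≤ pairCount j ω := by
  rw [pairCount, ← sum_add_sum_compl s]
  gcongr <;> exact (abs_sum_le_sum_abs _ _).trans_eq (sum_congr rfl fun t _ => abs_pairSign j _)

noncomputable def pairLogDiff (P : Finset ι) (j : β) (ω : ι → β × Bool) : ℝ :=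
  Real.log ((pairCount j ω + 2) ^ 2 - (signSum j P ω + signSum j Pᶜ ω) ^ 2) -
    Real.log ((pairCount j ω + 2) ^ 2 - (signSum j Pᶜ ω - signSum j P ω) ^ 2)

lemma pairLogDiff_flipCells_self (P : Finset ι) (l : β) (ω : ι → β × Bool) :
    pairLogDiff P l (flipCells (P ×ˢ {l}) ω) = -pairLogDiff P l ω := by
  rw [pairLogDiff, pairLogDiff, pairCount_flipCells, signSum_flipCells_of_forall_mem (by simp),
    signSum_flipCells_of_forall_notMem (by simp)]
  ring_nf

lemma pairLogDiff_flipCells_of_ne (P : Finset ι) {j l : β} (hjl : j ≠ l) (ω : ι → β × Bool) :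
    pairLogDiff P j (flipCells (P ×ˢ {l}) ω) = pairLogDiff P j ω := by
  rw [pairLogDiff, pairLogDiff, pairCount_flipCells,
    signSum_flipCells_of_forall_notMem (by simp [hjl.symm]),
    signSum_flipCells_of_forall_notMem (by simp [hjl.symm])]

lemma sq_pairLogDiff_ge (P : Finset ι) (j : β) (ω : ι → β × Bool) :
    16 * (signSum j P ω * signSum j Pᶜ ω) ^ 2 / (pairCount j ω + 2) ^ 4 ≤
      pairLogDiff P j ω ^ 2 := by
  set S := pairCount j ω
  set X := signSum j P ω
  set Y := signSum j Pᶜ ω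
  have hXY : |X| + |Y| ≤ S := abs_signSum_add_abs_signSum_compl_le j P ω
  have hsq : ∀ Z, |Z| ≤ S → 0 < (S + 2) ^ 2 - Z ^ 2 ∧ (S + 2) ^ 2 - Z ^ 2 ≤ (S + 2) ^ 2 :=
    fun Z hZ => by
      have : Z ^ 2 ≤ S ^ 2 := by rw [← sq_abs]; exact pow_le_pow_left₀ (abs_nonneg Z) hZ 2
      constructor <;> nlinarith [sq_nonneg Z, abs_nonneg Z]
  obtain ⟨h₁, h₁'⟩ := hsq (X + Y) ((abs_add_le X Y).trans hXY)
  obtain ⟨h₂, h₂'⟩ := hsq (Y - X) ((abs_sub Y X).trans (by linarith))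
  convert sq_sub_div_le_sq_log_sub_log_s9 h₁ h₂ h₁' h₂' using 1
  · field_simp; ring
  · rfl

variable [Fintype β]

lemma logCountSum_sub_logCountSum_flipCells (P : Finset ι) (ω : ι → β × Bool) :
    logCountSum ω - logCountSum (flipCells (P ×ˢ univ) ω) = ∑ j, pairLogDiff P j ω := by
  rw [logCountSum_eq, logCountSum_eq, ← sum_sub_distrib]
  refine sum_congr rfl fun j _ => ?_
  simp only [signSum, ← sum_add_sum_compl P]
  rw [← signSum, ← signSum, ← signSum, ← signSum, pairCount_flipCells,
    signSum_flipCells_of_forall_mem (by simp), signSum_flipCells_of_forall_notMem (by simp),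
    pairLogDiff]
  ring_nf

lemma sum_pairLogDiff_mul_pairLogDiff_eq_zero (P : Finset ι) {j l : β} (hjl : j ≠ l) :
    ∑ ω, pairLogDiff P j ω * pairLogDiff P l ω = 0 :=
  sum_eq_zero_of_comp_perm_eq_neg ((flipCells_involutive (P ×ˢ {l})).toPerm _) fun ω => by
    rw [Function.Involutive.coe_toPerm, pairLogDiff_flipCells_of_ne P hjl,
      pairLogDiff_flipCells_self, mul_neg]

lemma sum_mul_pairSign_mul_pairSign_eq_zero {t t' : ι} (htt' : t ≠ t') (j : β)
    {h : (ι → β × Bool) → ℝ} (hh : ∀ ω, h (flipCells ({t} ×ˢ univ) ω) = h ω) :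
    ∑ ω, h ω * (pairSign j (ω t) * pairSign j (ω t')) = 0 :=
  sum_eq_zero_of_comp_perm_eq_neg ((flipCells_involutive ({t} ×ˢ univ)).toPerm _) fun ω => by
    rw [Function.Involutive.coe_toPerm, hh, pairSign_flipCells, pairSign_flipCells,
      if_pos (by simp), if_neg (by simp [htt'])]
    ring

lemma sum_sq_signSum_mul_signSum_compl_mul (P : Finset ι) (j : β) (φ : ℝ → ℝ) :
    ∑ ω, (signSum j P ω * signSum j Pᶜ ω) ^ 2 * φ (pairCount j ω) =
      ∑ t ∈ P, ∑ s ∈ Pᶜ, ∑ ω, pairInd j (ω t) * pairInd j (ω s) * φ (pairCount j ω) := by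
  calc ∑ ω, (signSum j P ω * signSum j Pᶜ ω) ^ 2 * φ (pairCount j ω)
      = ∑ ω, (φ (pairCount j ω) * signSum j Pᶜ ω ^ 2) * signSum j P ω ^ 2 :=
        sum_congr rfl fun ω _ => by ring
    _ = ∑ t ∈ P, ∑ ω, (φ (pairCount j ω) * signSum j Pᶜ ω ^ 2) * pairSign j (ω t) ^ 2 :=
        sum_mul_sq_sum_of_orthogonal P (fun t ω => pairSign j (ω t))
          (fun ω => φ (pairCount j ω) * signSum j Pᶜ ω ^ 2)
          fun t ht t' _ htt' => sum_mul_pairSign_mul_pairSign_eq_zero htt' j fun ω => by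
            rw [pairCount_flipCells, signSum_flipCells_of_forall_notMem fun s hs => by
              simp only [mem_product, mem_singleton]; rintro ⟨rfl, -⟩; exact mem_compl.1 hs ht]
    _ = ∑ t ∈ P, ∑ ω, (φ (pairCount j ω) * pairInd j (ω t)) * signSum j Pᶜ ω ^ 2 :=
        sum_congr rfl fun t _ => sum_congr rfl fun ω _ => by rw [sq_pairSign]; ring
    _ = ∑ t ∈ P, ∑ s ∈ Pᶜ, ∑ ω, (φ (pairCount j ω) * pairInd j (ω t)) * pairSign j (ω s) ^ 2 :=
        sum_congr rfl fun t _ => sum_mul_sq_sum_of_orthogonal Pᶜ (fun s ω => pairSign j (ω s))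
          (fun ω => φ (pairCount j ω) * pairInd j (ω t))
          fun s _ s' _ hss' => sum_mul_pairSign_mul_pairSign_eq_zero hss' j fun ω => by
            rw [pairCount_flipCells, pairInd_flipCells]
    _ = _ := by
        simp only [sq_pairSign]
        exact sum_congr rfl fun t _ => sum_congr rfl fun s _ => sum_congr rfl fun ω _ => by ring

lemma sum_prod_pairInd (j : β) (F : Finset ι) :
    ∑ ω : ι → β × Bool, ∏ r ∈ F, pairInd j (ω r) =
      (2 * Fintype.card β : ℝ) ^ Fintype.card ι / (Fintype.card β : ℝ) ^ #F := by
  have : Nonempty β := ⟨j⟩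
  have hβ : (Fintype.card β : ℝ) ≠ 0 := Nat.cast_ne_zero.2 Fintype.card_ne_zero
  have hsum : ∀ r, ∑ a : β × Bool, (if r ∈ F then pairInd j a else 1) =
      2 * Fintype.card β * if r ∈ F then (Fintype.card β : ℝ)⁻¹ else 1 := fun r => by
    split_ifs
    · simp only [pairInd]
      rw [Fintype.sum_prod_type]
      simp only [Fintype.sum_bool, sum_add_distrib, sum_ite_eq', mem_univ, if_true]
      field_simp; norm_num
    · simp [mul_comm]
  calc ∑ ω : ι → β × Bool, ∏ r ∈ F, pairInd j (ω r)
      = ∑ ω : ι → β × Bool, ∏ r, (if r ∈ F then pairInd j (ω r) else 1) := by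
        simp only [Fintype.prod_ite_mem]
    _ = ∏ r, ∑ a : β × Bool, (if r ∈ F then pairInd j a else 1) :=
        (Fintype.prod_sum fun r a => if r ∈ F then pairInd j a else 1).symm
    _ = _ := by
        rw [prod_congr rfl fun r _ => hsum r, prod_mul_distrib, prod_const, card_univ,
          Fintype.prod_ite_mem, prod_const, inv_pow, div_eq_mul_inv]

lemma sum_pairInd_mul_pairInd {t s : ι} (hts : t ≠ s) (j : β) :
    ∑ ω : ι → β × Bool, pairInd j (ω t) * pairInd j (ω s) =
      (2 * Fintype.card β : ℝ) ^ Fintype.card ι / (Fintype.card β : ℝ) ^ 2 := by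
  simpa [prod_pair hts, card_pair hts] using sum_prod_pairInd j {t, s}

lemma sum_pairInd_mul_pairInd_mul_pairCount_add_two {t s : ι} (hts : t ≠ s) (j : β) :
    ∑ ω : ι → β × Bool, pairInd j (ω t) * pairInd j (ω s) * (pairCount j ω + 2) =
      (2 * Fintype.card β : ℝ) ^ Fintype.card ι / (Fintype.card β : ℝ) ^ 2 *
        (4 + (Fintype.card ι - 2) / Fintype.card β) := by
  have : Nonempty β := ⟨j⟩
  have hβ : (Fintype.card β : ℝ) ≠ 0 := Nat.cast_ne_zero.2 Fintype.card_ne_zero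
  have hn : 2 ≤ Fintype.card ι := card_pair hts ▸ card_le_univ {t, s}
  have hthird : ∀ r ∈ ({t, s} : Finset ι)ᶜ,
      ∑ ω : ι → β × Bool, pairInd j (ω t) * pairInd j (ω s) * pairInd j (ω r) =
        (2 * Fintype.card β : ℝ) ^ Fintype.card ι / (Fintype.card β : ℝ) ^ 3 := fun r hr => by
    have hr' : r ∉ ({t, s} : Finset ι) := mem_compl.1 hr
    have h := sum_prod_pairInd j (insert r {t, s})
    rw [card_insert_of_notMem hr', card_pair hts] at h
    rw [← h]
    exact sum_congr rfl fun ω _ => by rw [prod_insert hr', prod_pair hts]; ring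
  -- where `1ₜ 1ₛ = 1`, `pairCount j ω = 2 + ∑_{r ∉ {t, s}} 1ᵣ`
  have hsplit : ∀ ω : ι → β × Bool, pairInd j (ω t) * pairInd j (ω s) * (pairCount j ω + 2) =
      4 * (pairInd j (ω t) * pairInd j (ω s)) +
        ∑ r ∈ {t, s}ᶜ, pairInd j (ω t) * pairInd j (ω s) * pairInd j (ω r) := fun ω => by
    rw [pairCount, ← sum_add_sum_compl {t, s}, sum_pair hts, ← mul_sum]
    linear_combination pairInd j (ω s) * pairInd_mul_self j (ω t) +
      pairInd j (ω t) * pairInd_mul_self j (ω s)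
  rw [sum_congr rfl fun ω _ => hsplit ω, sum_add_distrib, ← mul_sum, sum_pairInd_mul_pairInd hts,
    sum_comm, sum_congr rfl hthird, sum_const, card_compl, card_pair hts, nsmul_eq_mul,
    Nat.cast_sub hn]
  field_simp
  ring

lemma sum_pairInd_mul_pairInd_div_ge {t s : ι} (hts : t ≠ s) (j : β) :
    (2 * Fintype.card β : ℝ) ^ Fintype.card ι * (Fintype.card β : ℝ) ^ 2 /
        (4 * Fintype.card β + Fintype.card ι - 2 : ℝ) ^ 4 ≤
      ∑ ω, pairInd j (ω t) * pairInd j (ω s) / (pairCount j ω + 2) ^ 4 := by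
  have : Nonempty β := ⟨j⟩
  have hβ : (0 : ℝ) < Fintype.card β := Nat.cast_pos.2 Fintype.card_pos
  have hn : (2 : ℝ) ≤ Fintype.card ι := by exact_mod_cast card_pair hts ▸ card_le_univ {t, s}
  have hJ := sum_pow_five_div_le_sum_div_pow_four univ
    (w := fun ω : ι → β × Bool => pairInd j (ω t) * pairInd j (ω s))
    (x := fun ω => pairCount j ω + 2)
    (fun ω _ => mul_nonneg (pairInd_nonneg j _) (pairInd_nonneg j _))
    (fun ω _ => by linarith [pairCount_nonneg j ω])
  rw [sum_pairInd_mul_pairInd hts, sum_pairInd_mul_pairInd_mul_pairCount_add_two hts] at hJ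
  convert hJ using 1
  have : (4 * Fintype.card β + Fintype.card ι - 2 : ℝ) ≠ 0 := by linarith
  field_simp
  ring

lemma sum_sq_pairLogDiff_ge (P : Finset ι) (j : β) :
    16 * (#P * #Pᶜ) * ((2 * Fintype.card β : ℝ) ^ Fintype.card ι * (Fintype.card β : ℝ) ^ 2 /
        (4 * Fintype.card β + Fintype.card ι - 2 : ℝ) ^ 4) ≤ ∑ ω, pairLogDiff P j ω ^ 2 := by
  set c : ℝ := (2 * Fintype.card β : ℝ) ^ Fintype.card ι * (Fintype.card β : ℝ) ^ 2 /
    (4 * Fintype.card β + Fintype.card ι - 2 : ℝ) ^ 4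
  calc 16 * (#P * #Pᶜ) * c = 16 * ∑ t ∈ P, ∑ s ∈ Pᶜ, c := by
        simp only [sum_const, nsmul_eq_mul]; ring
    _ ≤ 16 * ∑ t ∈ P, ∑ s ∈ Pᶜ, ∑ ω,
          pairInd j (ω t) * pairInd j (ω s) * (fun S => 1 / (S + 2) ^ 4) (pairCount j ω) := by
        gcongr with t ht s hs
        simp only [mul_one_div]
        exact sum_pairInd_mul_pairInd_div_ge (by rintro rfl; exact mem_compl.1 hs ht) j
    _ = ∑ ω, 16 * (signSum j P ω * signSum j Pᶜ ω) ^ 2 / (pairCount j ω + 2) ^ 4 := by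
        rw [← sum_sq_signSum_mul_signSum_compl_mul P j fun S => 1 / (S + 2) ^ 4, mul_sum]
        exact sum_congr rfl fun ω _ => by ring
    _ ≤ ∑ ω, pairLogDiff P j ω ^ 2 := sum_le_sum fun ω _ => sq_pairLogDiff_ge P j ω

theorem sum_sq_logCountSum_sub_flipCells_ge (P : Finset ι) :
    (Fintype.card β : ℝ) * (16 * (#P * #Pᶜ) *
        ((2 * Fintype.card β : ℝ) ^ Fintype.card ι * (Fintype.card β : ℝ) ^ 2 /
          (4 * Fintype.card β + Fintype.card ι - 2 : ℝ) ^ 4)) ≤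
      ∑ ω, (logCountSum ω - logCountSum (flipCells (P ×ˢ (univ : Finset β)) ω)) ^ 2 := by
  have hpyth := sum_mul_sq_sum_of_orthogonal (Ω := ι → β × Bool) univ
    (fun j => pairLogDiff P j) (fun _ => 1)
    fun j _ l _ hjl => by simpa using sum_pairLogDiff_mul_pairLogDiff_eq_zero P hjl
  simp only [one_mul] at hpyth
  simp only [logCountSum_sub_logCountSum_flipCells, hpyth]
  simpa only [sum_const, card_univ, nsmul_eq_mul] using
    sum_le_sum fun j (_ : j ∈ (univ : Finset β)) => sum_sq_pairLogDiff_ge P j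

theorem exists_perm_le_sum_sq_logCountSum_sub [Nonempty β] {α : Type*} [Fintype α]
    [DecidableEq α] (e : β × Bool ≃ α) :
    ∃ T : Equiv.Perm (ι → α),
      (Fintype.card β : ℝ) * ((Fintype.card ι / 2 : ℕ) * (Fintype.card ι - Fintype.card ι / 2 : ℕ)) /
          (4 * Fintype.card β + Fintype.card ι - 2) ^ 4 ≤
        (∑ ω, (logCountSum ω - logCountSum (T ω)) ^ 2) /
          ((Fintype.card α : ℝ) ^ 2 * (4 * Fintype.card (ι → α))) := by
  obtain ⟨P, -, hP⟩ := exists_subset_card_eq (s := (univ : Finset ι)) (Nat.div_le_self _ 2)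
  let E : (ι → β × Bool) ≃ (ι → α) := Equiv.piCongrRight fun _ => e
  let T := E.permCongr ((flipCells_involutive (P ×ˢ (univ : Finset β))).toPerm _)
  have hE : ∀ ω, logCountSum (E ω) = logCountSum ω := logCountSum_comp_equiv e
  have hT : ∑ ω, (logCountSum ω - logCountSum (T ω)) ^ 2 =
      ∑ ω, (logCountSum ω - logCountSum (flipCells (P ×ˢ (univ : Finset β)) ω)) ^ 2 := by
    rw [← E.sum_comp]
    simp only [T, Equiv.permCongr_apply, Equiv.symm_apply_apply, Function.Involutive.coe_toPerm, hE]
  have hα : (Fintype.card α : ℝ) = 2 * Fintype.card β := by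
    rw [← Fintype.card_congr e, Fintype.card_prod, Fintype.card_bool]; push_cast; ring
  have hβ : (1 : ℝ) ≤ Fintype.card β := Nat.one_le_cast.2 Fintype.card_pos
  refine ⟨T, ?_⟩
  have h2β : (0 : ℝ) < 2 * Fintype.card β := by linarith
  rw [hT, Fintype.card_fun, Nat.cast_pow, hα,
    le_div_iff₀ (mul_pos (pow_pos h2β 2) (mul_pos four_pos (pow_pos h2β _)))]
  refine le_of_eq_of_le ?_ (sum_sq_logCountSum_sub_flipCells_ge P)
  have : (4 * Fintype.card β + Fintype.card ι - 2 : ℝ) ≠ 0 := by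
    have : (0 : ℝ) ≤ Fintype.card ι := Nat.cast_nonneg _
    linarith
  rw [card_compl, hP, card_univ]
  field_simp
  ring

end LaplaceKL

open LaplaceKL in
/-- For `p` uniform over `[k]` (`k` even) and the Laplace add-1 estimator computed from
`n ≥ 10k` i.i.d. samples, `Var(KL(p ‖ p̂¹)) ≥ k/(32 n²)`. The sample space is
`Fin n → Fin k` with the uniform (counting, normalized) measure, `N i ω` is the count of
symbol `i`, and `KL(p ‖ p̂¹) = Σ_i (1/k) log((1/k) / ((N_i+1)/(n+k)))`. -/
theorem variance_kl_laplace_uniform_lb (k n : ℕ) (hk : 0 < k) (hke : Even k)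
    (hn : 10 * k ≤ n)
    (μ : Measure (Fin n → Fin k))
    (hμ : μ = (Fintype.card (Fin n → Fin k) : ENNReal)⁻¹ • Measure.count)
    (N : Fin k → (Fin n → Fin k) → ℕ)
    (hN : ∀ i ω, N i ω = (Finset.univ.filter fun t => ω t = i).card) :
    (k : ℝ) / (32 * (n : ℝ) ^ 2)
      ≤ variance (fun ω => ∑ i, (1 / (k : ℝ)) *
          Real.log ((1 / (k : ℝ)) / (((N i ω : ℝ) + 1) / ((n : ℝ) + k)))) μ := by
  obtain ⟨K, rfl⟩ := hke
  subst hμ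
  have hK : 0 < K := by omega
  have : NeZero K := ⟨hK.ne'⟩
  obtain ⟨T, hT⟩ := exists_perm_le_sum_sq_logCountSum_sub (ι := Fin n)
    (Fintype.equivFinOfCardEq (by simp; ring) : Fin K × Bool ≃ Fin (K + K))
  set f := fun ω : Fin n → Fin (K + K) => ∑ i, (1 / ((K + K : ℕ) : ℝ)) *
    Real.log ((1 / ((K + K : ℕ) : ℝ)) / (((N i ω : ℝ) + 1) / ((n : ℝ) + (K + K : ℕ))))
  have hf : ∀ ω, f ω - f (T ω) =
      (logCountSum (T ω) - logCountSum ω) / ((K + K : ℕ) : ℝ) := fun ω => by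
    simp only [f, hN]
    exact sum_mul_log_laplace_sub (by positivity) (by positivity) (symbolCount ω)
      (symbolCount (T ω))
  calc ((K + K : ℕ) : ℝ) / (32 * n ^ 2)
      ≤ K * ((n / 2 : ℕ) * (n - n / 2 : ℕ)) / (4 * K + n - 2) ^ 4 := by
        rw [Nat.cast_add, ← two_mul]
        exact two_mul_div_le_mul_div_pow_four hK (by omega)
    _ ≤ (∑ ω, (logCountSum ω - logCountSum (T ω)) ^ 2) /
          (((K + K : ℕ) : ℝ) ^ 2 * (4 * Fintype.card (Fin n → Fin (K + K)))) := by
        simpa only [Fintype.card_fin] using hT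
    _ = (∑ ω, (f ω - f (T ω)) ^ 2) / (4 * Fintype.card (Fin n → Fin (K + K))) := by
        rw [← div_div, sum_div]
        exact congrArg (· / _) (sum_congr rfl fun ω _ => by rw [hf]; ring)
    _ ≤ _ := sum_sq_sub_comp_perm_div_le_variance f T
end

section
/- Let n be a positive integer and let N ~ Poisson(n). Let X_i ~ Bin(min(N,n), p) and Y_i ~ Bin(|n − N|, p) be independent conditionally on N, and define M_i = X_i + Y_i·1{N ≤ n} and M'_i = X_i + Y_i·1{N > n}. Then M'_i is distributed as Poisson(np) and M_i is distributed as Binomial(n, p). -/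
open Finset

private lemma exp_tsum (x : ℝ) : ∑' i : ℕ, x ^ i / i.factorial = Real.exp x := by
  rw [Real.exp_eq_exp_ℝ, NormedSpace.exp_eq_tsum_div]

private lemma bin_sum_one (p : ℝ) (b : ℕ) :
    ∑ y ∈ Finset.range (b + 1), ((b.choose y : ℝ) * p ^ y * (1 - p) ^ (b - y)) = 1 := by
  have h := add_pow p (1 - p) b
  rw [show p + (1 - p) = 1 by ring, one_pow] at h
  calc ∑ y ∈ Finset.range (b + 1), ((b.choose y : ℝ) * p ^ y * (1 - p) ^ (b - y))
      = ∑ y ∈ Finset.range (b + 1), p ^ y * (1 - p) ^ (b - y) * (b.choose y : ℝ) :=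
        Finset.sum_congr rfl fun y _ => by ring
    _ = 1 := h.symm

private lemma point_sum (p : ℝ) (a m : ℕ) :
    ∑ x ∈ Finset.range (a + 1), ((a.choose x : ℝ) * p ^ x * (1 - p) ^ (a - x)) *
      (if x = m then 1 else 0) = (a.choose m : ℝ) * p ^ m * (1 - p) ^ (a - m) := by
  simp only [mul_ite, mul_one, mul_zero]
  rw [Finset.sum_ite_eq' (Finset.range (a + 1)) m]
  by_cases h : m ∈ Finset.range (a + 1)
  · rw [if_pos h]
  · rw [if_neg h]
    simp only [Finset.mem_range, not_lt] at h
    rw [Nat.choose_eq_zero_of_lt (by omega)]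
    simp

private lemma nat_conv (a b m : ℕ) :
    (∑ x ∈ Finset.range (a + 1), ∑ y ∈ Finset.range (b + 1),
      a.choose x * b.choose y * (if x + y = m then 1 else 0)) = (a + b).choose m := by
  rw [Nat.add_choose_eq, Finset.Nat.sum_antidiagonal_eq_sum_range_succ_mk]
  have key : ∀ x, (∑ y ∈ Finset.range (b + 1),
      a.choose x * b.choose y * (if x + y = m then 1 else 0))
      = if x ≤ m then a.choose x * b.choose (m - x) else 0 := by
    intro x
    by_cases hx : x ≤ m
    · rw [if_pos hx]
      have hcong : ∀ y ∈ Finset.range (b + 1),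
          a.choose x * b.choose y * (if x + y = m then 1 else 0)
          = if y = m - x then a.choose x * b.choose y else 0 := by
        intro y _
        by_cases h : x + y = m
        · rw [if_pos h, if_pos (by omega), mul_one]
        · rw [if_neg h, if_neg (by omega), mul_zero]
      rw [Finset.sum_congr rfl hcong, Finset.sum_ite_eq' (Finset.range (b + 1))]
      by_cases h : m - x ∈ Finset.range (b + 1)
      · rw [if_pos h]
      · rw [if_neg h]
        simp only [Finset.mem_range, not_lt] at h
        rw [Nat.choose_eq_zero_of_lt (show b < m - x by omega), mul_zero]
    · rw [if_neg hx]
      apply Finset.sum_eq_zero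
      intro y _
      rw [if_neg (by omega), mul_zero]
  rw [Finset.sum_congr rfl (fun x _ => key x)]
  have hL : (∑ x ∈ Finset.range (a + 1), if x ≤ m then a.choose x * b.choose (m - x) else 0)
      = ∑ x ∈ Finset.range (a + m + 1), if x ≤ m then a.choose x * b.choose (m - x) else 0 := by
    apply Finset.sum_subset
    · intro z hz; simp only [Finset.mem_range] at *; omega
    · intro x _ hx
      simp only [Finset.mem_range, not_lt] at hx
      by_cases h : x ≤ m
      · rw [if_pos h, Nat.choose_eq_zero_of_lt (by omega), zero_mul]
      · rw [if_neg h]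
  have hR : (∑ k ∈ Finset.range (m + 1), a.choose k * b.choose (m - k))
      = ∑ x ∈ Finset.range (a + m + 1), if x ≤ m then a.choose x * b.choose (m - x) else 0 := by
    rw [Finset.sum_congr rfl (fun k hk => by
      simp only [Finset.mem_range] at hk
      rw [if_pos (by omega)] : ∀ k ∈ Finset.range (m+1), a.choose k * b.choose (m-k)
        = if k ≤ m then a.choose k * b.choose (m - k) else 0)]
    apply Finset.sum_subset
    · intro z hz; simp only [Finset.mem_range] at *; omega
    · intro x _ hx
      simp only [Finset.mem_range, not_lt] at hx
      rw [if_neg (by omega)]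
  rw [hL, hR]

private lemma conv (p : ℝ) (a b m : ℕ) :
    (∑ x ∈ Finset.range (a + 1), ∑ y ∈ Finset.range (b + 1),
      ((a.choose x : ℝ) * p ^ x * (1 - p) ^ (a - x)) *
      ((b.choose y : ℝ) * p ^ y * (1 - p) ^ (b - y)) *
      (if x + y = m then 1 else 0))
    = ((a + b).choose m : ℝ) * p ^ m * (1 - p) ^ (a + b - m) := by
  have step : ∀ x ∈ Finset.range (a + 1), ∀ y ∈ Finset.range (b + 1),
      ((a.choose x : ℝ) * p ^ x * (1 - p) ^ (a - x)) *
      ((b.choose y : ℝ) * p ^ y * (1 - p) ^ (b - y)) *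
      (if x + y = m then 1 else 0)
      = ((a.choose x * b.choose y : ℕ) : ℝ) * (if x + y = m then 1 else 0)
        * (p ^ m * (1 - p) ^ (a + b - m)) := by
    intro x hx y hy
    simp only [Finset.mem_range] at hx hy
    by_cases h : x + y = m
    · rw [if_pos h]
      have e1 : a + b - m = (a - x) + (b - y) := by omega
      have e2 : m = x + y := h.symm
      rw [e1, e2, pow_add (1 - p), pow_add p]
      push_cast
      ring
    · rw [if_neg h, mul_zero, mul_zero, zero_mul]
  rw [Finset.sum_congr rfl (fun x hx => Finset.sum_congr rfl (fun y hy => step x hx y hy))]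
  simp only [← Finset.sum_mul]
  have hnat : (∑ x ∈ Finset.range (a + 1), ∑ y ∈ Finset.range (b + 1),
      ((a.choose x * b.choose y : ℕ) : ℝ) * (if x + y = m then 1 else 0))
      = ((a + b).choose m : ℝ) := by
    rw [← nat_conv a b m]
    push_cast
    rfl
  rw [hnat]
  ring

private lemma point_case (p : ℝ) (a b m : ℕ) :
    (∑ x ∈ Finset.range (a + 1), ∑ y ∈ Finset.range (b + 1),
      ((a.choose x : ℝ) * p ^ x * (1 - p) ^ (a - x)) *
      ((b.choose y : ℝ) * p ^ y * (1 - p) ^ (b - y)) *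
      (if x = m then 1 else 0))
    = (a.choose m : ℝ) * p ^ m * (1 - p) ^ (a - m) := by
  have step : ∀ x ∈ Finset.range (a + 1),
      (∑ y ∈ Finset.range (b + 1),
        ((a.choose x : ℝ) * p ^ x * (1 - p) ^ (a - x)) *
        ((b.choose y : ℝ) * p ^ y * (1 - p) ^ (b - y)) *
        (if x = m then 1 else 0))
      = ((a.choose x : ℝ) * p ^ x * (1 - p) ^ (a - x)) * (if x = m then 1 else 0) := by
    intro x _
    rw [show ((a.choose x : ℝ) * p ^ x * (1 - p) ^ (a - x)) * (if x = m then 1 else 0)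
      = ((a.choose x : ℝ) * p ^ x * (1 - p) ^ (a - x)) * (if x = m then 1 else 0)
        * ∑ y ∈ Finset.range (b + 1), ((b.choose y : ℝ) * p ^ y * (1 - p) ^ (b - y))
      by rw [bin_sum_one, mul_one]]
    rw [Finset.mul_sum]
    exact Finset.sum_congr rfl fun y _ => by ring
  rw [Finset.sum_congr rfl step]
  exact point_sum p a m

private lemma poisson_one (n : ℕ) :
    ∑' N : ℕ, (Real.exp (-(n : ℝ)) * (n : ℝ) ^ N / N.factorial) = 1 := by
  rw [tsum_congr (fun N => show Real.exp (-(n : ℝ)) * (n : ℝ) ^ N / N.factorial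
    = Real.exp (-(n : ℝ)) * ((n : ℝ) ^ N / N.factorial) by ring)]
  rw [tsum_mul_left, exp_tsum, ← Real.exp_add]
  simp

private lemma thinning (n : ℕ) (p : ℝ) (hp0 : 0 ≤ p) (hp1 : p ≤ 1) (m : ℕ) :
    (∑' N : ℕ, (Real.exp (-(n : ℝ)) * (n : ℝ) ^ N / N.factorial) *
      ((N.choose m : ℝ) * p ^ m * (1 - p) ^ (N - m)))
    = Real.exp (-((n : ℝ) * p)) * ((n : ℝ) * p) ^ m / m.factorial := by
  have hq0 : (0:ℝ) ≤ 1 - p := by linarith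
  have hble : ∀ N : ℕ, (N.choose m : ℝ) * p ^ m * (1 - p) ^ (N - m) ≤ 1 := by
    intro N
    by_cases h : m ≤ N
    · calc (N.choose m : ℝ) * p ^ m * (1 - p) ^ (N - m)
          ≤ ∑ x ∈ Finset.range (N + 1), ((N.choose x : ℝ) * p ^ x * (1 - p) ^ (N - x)) := by
            apply Finset.single_le_sum (f := fun x => (N.choose x : ℝ) * p ^ x * (1 - p) ^ (N - x))
            · intro x _; positivity
            · simp only [Finset.mem_range]; omega
        _ = 1 := bin_sum_one p N
    · rw [Nat.choose_eq_zero_of_lt (by omega)]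
      norm_num
  have hsum : Summable (fun N : ℕ => (Real.exp (-(n : ℝ)) * (n : ℝ) ^ N / N.factorial) *
      ((N.choose m : ℝ) * p ^ m * (1 - p) ^ (N - m))) := by
    refine Summable.of_nonneg_of_le (fun N => by positivity) (fun N => ?_)
      ((Real.summable_pow_div_factorial (n : ℝ)).mul_left (Real.exp (-(n : ℝ))))
    rw [mul_div_assoc]
    exact mul_le_of_le_one_right (by positivity) (hble N)
  rw [← Summable.sum_add_tsum_nat_add m hsum]
  have hzero : (∑ i ∈ Finset.range m, (Real.exp (-(n : ℝ)) * (n : ℝ) ^ i / i.factorial) *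
      ((i.choose m : ℝ) * p ^ m * (1 - p) ^ (i - m))) = 0 := by
    apply Finset.sum_eq_zero
    intro i hi
    simp only [Finset.mem_range] at hi
    simp [Nat.choose_eq_zero_of_lt hi]
  rw [hzero, zero_add]
  have key : ∀ i : ℕ, (Real.exp (-(n : ℝ)) * (n : ℝ) ^ (i + m) / (i + m).factorial) *
      (((i + m).choose m : ℝ) * p ^ m * (1 - p) ^ (i + m - m))
      = (Real.exp (-(n : ℝ)) * ((n : ℝ) * p) ^ m / m.factorial) *
        (((n : ℝ) * (1 - p)) ^ i / i.factorial) := by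
    intro i
    have hc : ((i + m).choose m : ℝ) * m.factorial * i.factorial = (i + m).factorial := by
      have h := Nat.choose_mul_factorial_mul_factorial (Nat.le_add_left m i)
      rw [Nat.add_sub_cancel] at h
      exact_mod_cast h
    rw [Nat.add_sub_cancel]
    have h1 : ((i + m).factorial : ℝ) ≠ 0 := Nat.cast_ne_zero.2 (Nat.factorial_ne_zero _)
    have h2 : ((m.factorial : ℝ)) ≠ 0 := Nat.cast_ne_zero.2 (Nat.factorial_ne_zero _)
    have h3 : ((i.factorial : ℝ)) ≠ 0 := Nat.cast_ne_zero.2 (Nat.factorial_ne_zero _)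
    field_simp
    rw [mul_pow, mul_pow, pow_add]
    linear_combination ((n : ℝ) ^ i * (n : ℝ) ^ m * p ^ m
      * (1 - p) ^ i) * hc
  rw [tsum_congr key, tsum_mul_left, exp_tsum]
  have hexp : Real.exp (-(n : ℝ)) * Real.exp ((n : ℝ) * (1 - p)) = Real.exp (-((n : ℝ) * p)) := by
    rw [← Real.exp_add]; congr 1; ring
  linear_combination (((n : ℝ) * p) ^ m / m.factorial) * hexp

/-- Coupling of binomial and Poisson: let `N ~ Poisson(n)`, and conditionally on `N` let
`X ~ Bin(min(N,n), p)` and `Y ~ Bin(|n − N|, p)` be independent. Set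
`M = X + Y·1{N ≤ n}` and `M' = X + Y·1{N > n}`. Then `M' ~ Poisson(np)` and
`M ~ Bin(n, p)`. The marginal laws are expressed by summing the joint pmf. -/
theorem poisson_binomial_coupling_marginals (n : ℕ) (hn : 0 < n) (p : ℝ)
    (hp0 : 0 ≤ p) (hp1 : p ≤ 1) :
    (∀ m : ℕ,
      (∑' N : ℕ, (Real.exp (-(n : ℝ)) * (n : ℝ) ^ N / N.factorial) *
        ∑ x ∈ Finset.range (min N n + 1), ∑ y ∈ Finset.range (max N n - min N n + 1),
          (((min N n).choose x : ℝ) * p ^ x * (1 - p) ^ (min N n - x)) *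
          (((max N n - min N n).choose y : ℝ) * p ^ y * (1 - p) ^ (max N n - min N n - y)) *
          (if x + (if n < N then y else 0) = m then 1 else 0))
      = Real.exp (-((n : ℝ) * p)) * ((n : ℝ) * p) ^ m / m.factorial)
    ∧
    (∀ m : ℕ,
      (∑' N : ℕ, (Real.exp (-(n : ℝ)) * (n : ℝ) ^ N / N.factorial) *
        ∑ x ∈ Finset.range (min N n + 1), ∑ y ∈ Finset.range (max N n - min N n + 1),
          (((min N n).choose x : ℝ) * p ^ x * (1 - p) ^ (min N n - x)) *
          (((max N n - min N n).choose y : ℝ) * p ^ y * (1 - p) ^ (max N n - min N n - y)) *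
          (if x + (if N ≤ n then y else 0) = m then 1 else 0))
      = (n.choose m : ℝ) * p ^ m * (1 - p) ^ (n - m)) := by
  constructor
  · intro m
    have hinner : ∀ N : ℕ,
        (∑ x ∈ Finset.range (min N n + 1), ∑ y ∈ Finset.range (max N n - min N n + 1),
          (((min N n).choose x : ℝ) * p ^ x * (1 - p) ^ (min N n - x)) *
          (((max N n - min N n).choose y : ℝ) * p ^ y * (1 - p) ^ (max N n - min N n - y)) *
          (if x + (if n < N then y else 0) = m then 1 else 0))
        = (N.choose m : ℝ) * p ^ m * (1 - p) ^ (N - m) := by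
      intro N
      rcases le_or_gt N n with h | h
      · simp only [min_eq_left h, max_eq_right h, if_neg (not_lt.2 h), add_zero]
        have := point_case p N (n - N) m
        rw [show N - m = min N n - m by rw [min_eq_left h]] at this ⊢
        rw [min_eq_left h] at this ⊢
        exact this
      · simp only [min_eq_right h.le, max_eq_left h.le, if_pos h]
        have := conv p n (N - n) m
        rw [Nat.add_sub_cancel' h.le] at this
        exact this
    rw [tsum_congr (fun N => by rw [hinner N])]
    exact thinning n p hp0 hp1 m
  · intro m
    have hinner : ∀ N : ℕ,
        (∑ x ∈ Finset.range (min N n + 1), ∑ y ∈ Finset.range (max N n - min N n + 1),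
          (((min N n).choose x : ℝ) * p ^ x * (1 - p) ^ (min N n - x)) *
          (((max N n - min N n).choose y : ℝ) * p ^ y * (1 - p) ^ (max N n - min N n - y)) *
          (if x + (if N ≤ n then y else 0) = m then 1 else 0))
        = (n.choose m : ℝ) * p ^ m * (1 - p) ^ (n - m) := by
      intro N
      rcases le_or_gt N n with h | h
      · simp only [min_eq_left h, max_eq_right h, if_pos h]
        have := conv p N (n - N) m
        rw [Nat.add_sub_cancel' h] at this
        exact this
      · simp only [min_eq_right h.le, max_eq_left h.le, if_neg (not_le.2 h), add_zero]
        exact point_case p n (N - n) m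
    rw [tsum_congr (fun N => by rw [hinner N])]
    rw [tsum_mul_right, poisson_one, one_mul]
end

section
/- If N ~ Poisson(n) with n a positive integer, then E[(n − N)/(min(n, N) + 1)] ≤ 29/n. -/
/-! Split `(n - N) / (min n N + 1)` as `(n - N) / (n + 1)` plus an excess term that vanishes for
`N ≥ n`. The first part has mean zero since `E N = n`. For `N < n` the recursion
`(N + 1) P(N + 1) = n P(N)` rewrites the excess as `P(N + 1) (n - N)² / (n (n + 1))`, so after the
shift `N + 1 ↦ M` its expectation is at most `E (n + 1 - M)² / (n (n + 1)) = 1 / n`, because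
`Var N = n`. -/

noncomputable def poissonWeight (r : ℝ) (k : ℕ) : ℝ := Real.exp (-r) * r ^ k / k.factorial

theorem hasSum_poissonWeight (r : ℝ) : HasSum (poissonWeight r) 1 := by
  have h := (NormedSpace.expSeries_div_hasSum_exp r).mul_left (Real.exp (-r))
  rw [← Real.exp_eq_exp_ℝ, ← Real.exp_add, neg_add_cancel, Real.exp_zero] at h
  exact h.congr_fun fun k ↦ mul_div_assoc _ _ _

theorem poissonWeight_nonneg {r : ℝ} (hr : 0 ≤ r) (k : ℕ) : 0 ≤ poissonWeight r k := by
  unfold poissonWeight; positivity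

theorem succ_mul_poissonWeight_succ (r : ℝ) (k : ℕ) :
    (k + 1) * poissonWeight r (k + 1) = r * poissonWeight r k := by
  simp only [poissonWeight, Nat.factorial_succ, Nat.cast_mul, pow_succ]
  field_simp
  push_cast
  ring

theorem HasSum.poissonWeight_mul_natCast_mul {r s : ℝ} {f : ℕ → ℝ}
    (h : HasSum (fun k ↦ poissonWeight r k * f (k + 1)) s) :
    HasSum (fun k ↦ poissonWeight r k * (k * f k)) (r * s) := by
  rw [← hasSum_nat_add_iff' 1, Finset.sum_range_one, Nat.cast_zero, zero_mul, mul_zero, sub_zero]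
  refine (h.mul_left r).congr_fun fun k ↦ ?_
  push_cast
  linear_combination f (k + 1) * succ_mul_poissonWeight_succ r k

theorem hasSum_poissonWeight_mul_natCast (r : ℝ) :
    HasSum (fun k ↦ poissonWeight r k * k) r := by
  simpa using HasSum.poissonWeight_mul_natCast_mul (f := fun _ ↦ 1)
    ((hasSum_poissonWeight r).congr_fun fun k ↦ mul_one _)

theorem hasSum_poissonWeight_mul_natCast_sq (r : ℝ) :
    HasSum (fun k ↦ poissonWeight r k * (k : ℝ) ^ 2) (r ^ 2 + r) := by
  have h : HasSum (fun k ↦ poissonWeight r k * ((k + 1 : ℕ) : ℝ)) (r + 1) :=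
    ((hasSum_poissonWeight_mul_natCast r).add (hasSum_poissonWeight r)).congr_fun
      fun k ↦ by push_cast; ring
  exact (by ring : r * (r + 1) = r ^ 2 + r) ▸
    h.poissonWeight_mul_natCast_mul.congr_fun fun k ↦ by ring

theorem hasSum_poissonWeight_mul_sub (r a : ℝ) :
    HasSum (fun k ↦ poissonWeight r k * (a - k)) (a - r) :=
  (by ring : 1 * a - r = a - r) ▸
    (((hasSum_poissonWeight r).mul_right a).sub (hasSum_poissonWeight_mul_natCast r)).congr_fun
      fun k ↦ by ring

theorem hasSum_poissonWeight_mul_sub_sq (r a : ℝ) :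
    HasSum (fun k ↦ poissonWeight r k * (a - k) ^ 2) ((a - r) ^ 2 + r) :=
  (by ring : 1 * a ^ 2 - r * (2 * a) + (r ^ 2 + r) = (a - r) ^ 2 + r) ▸
    ((((hasSum_poissonWeight r).mul_right (a ^ 2)).sub
      ((hasSum_poissonWeight_mul_natCast r).mul_right (2 * a))).add
        (hasSum_poissonWeight_mul_natCast_sq r)).congr_fun fun k ↦ by ring

theorem poissonWeight_mul_sub_mul_inv_min_sub_inv_nonneg (n k : ℕ) :
    0 ≤ poissonWeight n k * ((n - k) * (((min n k : ℕ) + 1 : ℝ)⁻¹ - ((n : ℝ) + 1)⁻¹)) := by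
  refine mul_nonneg (poissonWeight_nonneg n.cast_nonneg k) ?_
  rcases le_total k n with hk | hk
  · rw [min_eq_right hk]
    have hk' : (k : ℝ) ≤ n := by exact_mod_cast hk
    exact mul_nonneg (by linarith) (by rw [sub_nonneg]; gcongr)
  · rw [min_eq_left hk, sub_self, mul_zero]

theorem poissonWeight_mul_sub_mul_inv_min_sub_inv_le (n k : ℕ) :
    poissonWeight n k * ((n - k) * (((min n k : ℕ) + 1 : ℝ)⁻¹ - ((n : ℝ) + 1)⁻¹)) ≤
      poissonWeight n (k + 1) * ((n + 1) - (k + 1 : ℕ)) ^ 2 / (n * (n + 1)) := by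
  rcases lt_or_ge k n with hk | hk
  · rw [min_eq_right hk.le]
    have hn : (0 : ℝ) < n := by exact_mod_cast (k.zero_le.trans_lt hk)
    have hstep := succ_mul_poissonWeight_succ n k
    apply le_of_eq
    field_simp
    push_cast
    linear_combination -((n : ℝ) - k) ^ 2 * hstep
  · rw [min_eq_left hk, sub_self, mul_zero, mul_zero]
    have := poissonWeight_nonneg n.cast_nonneg (k + 1)
    positivity

theorem tsum_poissonWeight_mul_sub_div_min_add_one_le (n : ℕ) :
    ∑' k, poissonWeight n k * ((n - k) / ((min n k : ℕ) + 1 : ℝ)) ≤ 1 / n := by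
  set g : ℕ → ℝ := fun k ↦
    poissonWeight n k * ((n - k) * (((min n k : ℕ) + 1 : ℝ)⁻¹ - ((n : ℝ) + 1)⁻¹))
  set f : ℕ → ℝ := fun m ↦ poissonWeight n m * ((n + 1) - m) ^ 2
  have hf : HasSum f (n + 1) := 
    (by ring : ((n : ℝ) + 1 - n) ^ 2 + n = n + 1) ▸ hasSum_poissonWeight_mul_sub_sq n (n + 1)
  have hf_shift : ∑' k, f (k + 1) ≤ n + 1 :=
    hf.tsum_eq ▸ tsum_comp_le_tsum_of_inj hf.summable
      (fun m ↦ mul_nonneg (poissonWeight_nonneg n.cast_nonneg m) (sq_nonneg _)) Nat.succ_injective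
  have hf_shift_div : Summable fun k ↦ f (k + 1) / (n * (n + 1)) :=
    ((summable_nat_add_iff 1).mpr hf.summable).div_const _
  have hg : Summable g :=
    .of_nonneg_of_le (poissonWeight_mul_sub_mul_inv_min_sub_inv_nonneg n)
      (poissonWeight_mul_sub_mul_inv_min_sub_inv_le n) hf_shift_div
  have hcentered : HasSum (fun k ↦ poissonWeight n k * ((n - k) / ((n : ℝ) + 1))) 0 := by
    simpa [mul_div_assoc] using (hasSum_poissonWeight_mul_sub n n).div_const ((n : ℝ) + 1)
  calc ∑' k, poissonWeight n k * ((n - k) / ((min n k : ℕ) + 1 : ℝ))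
      = ∑' k, (poissonWeight n k * ((n - k) / ((n : ℝ) + 1)) + g k) :=
        tsum_congr fun k ↦ by simp only [g]; ring
    _ = ∑' k, g k := by rw [hcentered.summable.tsum_add hg, hcentered.tsum_eq, zero_add]
    _ ≤ ∑' k, f (k + 1) / (n * (n + 1)) :=
        hg.tsum_le_tsum (poissonWeight_mul_sub_mul_inv_min_sub_inv_le n) hf_shift_div
    _ = (∑' k, f (k + 1)) / (n * (n + 1)) := tsum_div_const
    _ ≤ (n + 1) / (n * (n + 1)) := by gcongr
    _ = 1 / n := by rw [div_mul_cancel_right₀ (by positivity), one_div]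

theorem poisson_expectation_first_term_general (n : ℕ) :
    ∑' N : ℕ, (Real.exp (-(n : ℝ)) * (n : ℝ) ^ N / N.factorial) *
        (((n : ℝ) - N) / ((min n N : ℕ) + 1 : ℝ))
      ≤ 29 / n :=
  (tsum_poissonWeight_mul_sub_div_min_add_one_le n).trans <|
    div_le_div_of_nonneg_right (by norm_num) n.cast_nonneg

/-- If `N ~ Poisson(n)` with `n ≥ 1`, then `E[(n − N)/(min(n, N) + 1)] ≤ 29/n`. -/
theorem poisson_expectation_first_term (n : ℕ) (hn : 0 < n) :
    ∑' N : ℕ, (Real.exp (-(n : ℝ)) * (n : ℝ) ^ N / N.factorial) *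
        (((n : ℝ) - N) / ((min n N : ℕ) + 1 : ℝ))
      ≤ 29 / n :=
  poisson_expectation_first_term_general n
end

section
/- If N ~ Poisson(n) with n a positive integer and p ∈ (0,1], then E[|n − N| / ((min(n, N) + 1)^2 p)] ≤ 160/(n^{3/2} p). -/
/-!
By Cauchy–Schwarz, in the form `2ab ≤ a²/t + t b²`, the expectation is at most
`√(E[(N - n)²] · E[(min(n, N) + 1)⁻⁴])`. The first factor is the variance `n`. For the second,
`(N + 1)⁻⁴ ≤ 4! · N! / (N + 4)!` and the index shift `N ↦ N + 4` gives
`E[N! / (N + 4)!] ≤ n⁻⁴`, while the case `min(n, N) = n` contributes at most `n⁻⁴`.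
So the expectation is at most `√(n · 25 / n⁴) = 5 / n^{3/2}`.
-/

open Real Finset
open scoped Nat

lemma hasSum_descFactorial_mul_pow_div_factorial (x : ℝ) (k : ℕ) :
    HasSum (fun N : ℕ ↦ (N.descFactorial k : ℝ) * (x ^ N / N !)) (x ^ k * exp x) := by
  rw [← hasSum_nat_add_iff' k]
  have hlow : ∑ i ∈ range k, (i.descFactorial k : ℝ) * (x ^ i / i !) = 0 :=
    sum_eq_zero fun i hi ↦ by simp [Nat.descFactorial_of_lt (mem_range.mp hi)]
  rw [hlow, sub_zero, exp_eq_exp_ℝ]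
  refine ((NormedSpace.expSeries_div_hasSum_exp x).mul_left (x ^ k)).congr_fun fun M ↦ ?_
  have h := Nat.factorial_mul_descFactorial (Nat.le_add_left k M)
  rw [Nat.add_sub_cancel] at h
  rw [← h, pow_add]
  push_cast
  field_simp

lemma hasSum_descFactorial_mul_poisson (x : ℝ) (k : ℕ) :
    HasSum (fun N : ℕ ↦ (N.descFactorial k : ℝ) * (exp (-x) * x ^ N / N !)) (x ^ k) := by
  have h := (hasSum_descFactorial_mul_pow_div_factorial x k).mul_left (exp (-x))
  rw [mul_left_comm, ← exp_add, neg_add_cancel, exp_zero, mul_one] at h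
  exact h.congr_fun fun N ↦ by ring

lemma hasSum_poisson (x : ℝ) : HasSum (fun N : ℕ ↦ exp (-x) * x ^ N / N !) 1 := by
  simpa using hasSum_descFactorial_mul_poisson x 0

lemma summable_poisson_div {x : ℝ} (hx : 0 ≤ x) {c : ℕ → ℝ} (hc : ∀ N, 1 ≤ c N) :
    Summable fun N : ℕ ↦ exp (-x) * x ^ N / N ! / c N :=
  (hasSum_poisson x).summable.of_nonneg_of_le
    (fun N ↦ div_nonneg (by positivity) (zero_le_one.trans (hc N)))
    fun N ↦ div_le_self (by positivity) (hc N)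

lemma hasSum_sq_sub_mul_poisson (x : ℝ) :
    HasSum (fun N : ℕ ↦ ((N : ℝ) - x) ^ 2 * (exp (-x) * x ^ N / N !)) x := by
  have h0 := hasSum_descFactorial_mul_poisson x 0
  have h1 := hasSum_descFactorial_mul_poisson x 1
  have h2 := hasSum_descFactorial_mul_poisson x 2
  have h := (h2.add (h1.mul_left (1 - 2 * x))).add (h0.mul_left (x ^ 2))
  rw [show x ^ 2 + (1 - 2 * x) * x ^ 1 + x ^ 2 * x ^ 0 = x by ring] at h
  refine h.congr_fun fun N ↦ ?_
  rcases N with _ | M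
  · simp
  · simp [Nat.descFactorial]
    ring

lemma tsum_poisson_div_succ_pow_le {x : ℝ} (hx : 0 < x) (k : ℕ) :
    ∑' N : ℕ, exp (-x) * x ^ N / N ! / (N + 1) ^ k ≤ k ! / x ^ k := by
  set P : ℕ → ℝ := fun N ↦ exp (-x) * x ^ N / N ! with hPdef
  have hP0 : ∀ N, 0 ≤ P N := fun N ↦ by positivity
  have hshift : ∀ N : ℕ, P N / (N + 1) ^ k ≤ k ! / x ^ k * P (N + k) := by
    intro N
    have hasc : ((N + 1).ascFactorial k : ℝ) ≤ k ! * (N + 1) ^ k := by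
      exact_mod_cast Nat.ascFactorial_le_factorial_mul_pow (N + 1) k
    have hasc0 : (0 : ℝ) < (N + 1).ascFactorial k := by
      exact_mod_cast Nat.ascFactorial_pos N k
    calc P N / (N + 1) ^ k = P N * (1 / (N + 1) ^ k) := by ring
      _ ≤ P N * (k ! / (N + 1).ascFactorial k) := by
          refine mul_le_mul_of_nonneg_left ?_ (hP0 N)
          rw [div_le_div_iff₀ (by positivity) hasc0]
          linarith
      _ = k ! / x ^ k * P (N + k) := by
          simp only [hPdef]
          rw [← Nat.factorial_mul_ascFactorial, pow_add]
          push_cast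
          field_simp
  have hsum : Summable fun N ↦ P (N + k) := (summable_nat_add_iff k).mpr (hasSum_poisson x).summable
  have htail : ∑' N, P (N + k) ≤ 1 := by
    rw [((hasSum_nat_add_iff' k).mpr (hasSum_poisson x)).tsum_eq]
    exact sub_le_self _ (sum_nonneg fun i _ ↦ hP0 i)
  calc ∑' N, P N / (N + 1) ^ k ≤ ∑' N, k ! / x ^ k * P (N + k) :=
        Summable.tsum_le_tsum hshift
          (Summable.of_nonneg_of_le (fun N ↦ by positivity) hshift (hsum.mul_left _))
          (hsum.mul_left _)
    _ = k ! / x ^ k * ∑' N, P (N + k) := tsum_mul_left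
    _ ≤ k ! / x ^ k := mul_le_of_le_one_right (by positivity) htail

lemma tsum_poisson_div_min_succ_pow_le {n : ℕ} (hn : 0 < n) (k : ℕ) :
    ∑' N : ℕ, exp (-n) * n ^ N / N ! / ((min n N : ℕ) + 1 : ℝ) ^ k ≤ (k ! + 1) / n ^ k := by
  set P : ℕ → ℝ := (fun N ↦ exp (-n) * n ^ N / N !)
  have hn' : (0 : ℝ) < n := by exact_mod_cast hn
  have hsplit : ∀ N : ℕ,
      P N / ((min n N : ℕ) + 1 : ℝ) ^ k ≤ P N / (N + 1) ^ k + P N / (n + 1) ^ k := by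
    intro N
    rcases min_choice n N with h | h <;> rw [h]
    · exact le_add_of_nonneg_left (by positivity)
    · exact le_add_of_nonneg_right (by positivity)
  have hfirst : Summable fun N : ℕ ↦ P N / (N + 1) ^ k :=
    summable_poisson_div hn'.le fun N ↦ one_le_pow₀ (by linarith [N.cast_nonneg (α := ℝ)])
  have hmaj := hfirst.add ((hasSum_poisson (n : ℝ)).summable.div_const ((n + 1) ^ k))
  have hlast : (1 : ℝ) / (n + 1) ^ k ≤ 1 / n ^ k := by gcongr; linarith
  calc ∑' N, P N / ((min n N : ℕ) + 1 : ℝ) ^ k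
      ≤ ∑' N, (P N / (N + 1) ^ k + P N / (n + 1) ^ k) :=
        Summable.tsum_le_tsum hsplit
          (hmaj.of_nonneg_of_le (fun N ↦ by positivity) hsplit) hmaj
    _ = ∑' N, P N / (N + 1) ^ k + 1 / (n + 1) ^ k := by
        rw [hfirst.tsum_add ((hasSum_poisson (n : ℝ)).summable.div_const _), tsum_div_const,
          (hasSum_poisson (n : ℝ)).tsum_eq]
    _ ≤ k ! / n ^ k + 1 / n ^ k := add_le_add (tsum_poisson_div_succ_pow_le hn' k) hlast
    _ = (k ! + 1) / n ^ k := by ring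

lemma two_mul_le_div_add_mul_sq (a b : ℝ) {t : ℝ} (ht : 0 < t) :
    2 * (a * b) ≤ a ^ 2 / t + t * b ^ 2 := by
  rw [div_add' _ _ _ ht.ne', le_div_iff₀ ht]
  nlinarith [sq_nonneg (a - t * b)]

lemma tsum_mul_mul_le {ι : Type*} {w a b : ι → ℝ} (hw : ∀ i, 0 ≤ w i) {t : ℝ} (ht : 0 < t)
    (ha : Summable fun i ↦ w i * a i ^ 2) (hb : Summable fun i ↦ w i * b i ^ 2) :
    ∑' i, w i * (a i * b i)
      ≤ ((∑' i, w i * a i ^ 2) / t + t * ∑' i, w i * b i ^ 2) / 2 := by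
  have hbound : ∀ i, w i * (|a i| * |b i|) ≤ (w i * a i ^ 2 / t + t * (w i * b i ^ 2)) / 2 := by
    intro i
    have := mul_le_mul_of_nonneg_left (two_mul_le_div_add_mul_sq |a i| |b i| ht) (hw i)
    rw [sq_abs, sq_abs] at this
    linarith [show w i * (a i ^ 2 / t) = w i * a i ^ 2 / t by ring]
  have hmaj : Summable fun i ↦ (w i * a i ^ 2 / t + t * (w i * b i ^ 2)) / 2 :=
    ((ha.div_const t).add (hb.mul_left t)).div_const 2
  have habs : Summable fun i ↦ w i * (a i * b i) := by
    refine hmaj.of_norm_bounded fun i ↦ ?_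
    rw [Real.norm_eq_abs, abs_mul, abs_mul, abs_of_nonneg (hw i)]
    exact hbound i
  calc ∑' i, w i * (a i * b i)
      ≤ ∑' i, (w i * a i ^ 2 / t + t * (w i * b i ^ 2)) / 2 := by
        refine habs.tsum_le_tsum (fun i ↦ ?_) hmaj
        refine le_trans ?_ (hbound i)
        rw [← abs_mul]
        exact mul_le_mul_of_nonneg_left (le_abs_self _) (hw i)
    _ = ((∑' i, w i * a i ^ 2) / t + t * ∑' i, w i * b i ^ 2) / 2 := by
        rw [tsum_div_const, (ha.div_const t).tsum_add (hb.mul_left t), tsum_div_const,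
          tsum_mul_left]

lemma tsum_poisson_mul_abs_sub_div_min_succ_sq_le {n : ℕ} (hn : 0 < n) :
    ∑' N : ℕ, exp (-n) * n ^ N / N ! * (|(n : ℝ) - N| / ((min n N : ℕ) + 1 : ℝ) ^ 2)
      ≤ 5 / (n : ℝ) ^ ((3 : ℝ) / 2) := by
  set P : ℕ → ℝ := (fun N ↦ exp (-n) * n ^ N / N !)
  set s : ℝ := (n : ℝ) ^ ((3 : ℝ) / 2) with hsdef
  have hn' : (0 : ℝ) < n := by exact_mod_cast hn
  have hs : 0 < s := by positivity
  have hs_sq : s ^ 2 = n ^ 3 := by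
    rw [hsdef, ← Real.rpow_mul_natCast hn'.le]
    norm_num
  have hvar : HasSum (fun N : ℕ ↦ P N * |(n : ℝ) - N| ^ 2) n :=
    (hasSum_sq_sub_mul_poisson (n : ℝ)).congr_fun fun N ↦ by rw [sq_abs]; ring
  have hinv_eq : ∀ N : ℕ, P N * (1 / ((min n N : ℕ) + 1 : ℝ) ^ 2) ^ 2
      = P N / ((min n N : ℕ) + 1 : ℝ) ^ 4 := fun N ↦ by rw [one_div_pow, ← pow_mul]; ring
  have hinv_sum : Summable fun N : ℕ ↦ P N * (1 / ((min n N : ℕ) + 1 : ℝ) ^ 2) ^ 2 := by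
    simp only [hinv_eq]
    exact summable_poisson_div hn'.le fun N ↦
      one_le_pow₀ (le_add_of_nonneg_left (Nat.cast_nonneg _))
  have hcs := tsum_mul_mul_le (fun N ↦ by positivity : ∀ N, 0 ≤ P N)
    (by positivity : 0 < n * s / 5) hvar.summable hinv_sum
  simp only [hinv_eq, hvar.tsum_eq, mul_one_div] at hcs
  calc _ ≤ _ := hcs
    _ ≤ (n / (n * s / 5) + n * s / 5 * ((4 ! + 1) / n ^ 4)) / 2 := by
        gcongr
        exact tsum_poisson_div_min_succ_pow_le hn 4
    _ = 5 / s := by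
        norm_num [Nat.factorial]
        field_simp
        linear_combination 25 * hs_sq

/-- If `N ~ Poisson(n)` with `n ≥ 1` and `p ∈ (0,1]`, then
`E[|n − N| / ((min(n, N) + 1)² p)] ≤ 160/(n^{3/2} p)`. -/
theorem poisson_expectation_third_term (n : ℕ) (hn : 0 < n) (p : ℝ)
    (hp : p ∈ Set.Ioc (0 : ℝ) 1) :
    ∑' N : ℕ, (Real.exp (-(n : ℝ)) * (n : ℝ) ^ N / N.factorial) *
        (|(n : ℝ) - N| / (((min n N : ℕ) + 1 : ℝ) ^ 2 * p))
      ≤ 160 / ((n : ℝ) ^ ((3 : ℝ) / 2) * p) := by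
  have hp0 : 0 < p := hp.1
  calc _ = (∑' N : ℕ, exp (-n) * n ^ N / N ! *
        (|(n : ℝ) - N| / ((min n N : ℕ) + 1 : ℝ) ^ 2)) / p := by
        rw [← tsum_div_const]
        congr 1 with N
        rw [← div_div]
        exact (mul_div_assoc _ _ _).symm
    _ ≤ 5 / (n : ℝ) ^ ((3 : ℝ) / 2) / p := by
        gcongr
        exact tsum_poisson_mul_abs_sub_div_min_succ_sq_le hn
    _ ≤ 160 / ((n : ℝ) ^ ((3 : ℝ) / 2) * p) := by
        rw [div_div]
        gcongr
        norm_num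
end
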